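/- arXiv:1904.09907 — 9 statements merged into one kernel-verified Lean document; each statement's English description precedes it below -/
import Mathlib

section
/- Let X be a zero-dimensional compact Hausdorff space. Then the family {⟨A,B⟩ : A, B clopen subsets of X} is a subbasis for the compact-open topology on H(X). -/
open Set TopologicalSpace

noncomputable section

/-- The compact-open topology on the group `H(X)` of self-homeomorphisms of `X`,
generated by the sets `V(K,U) = {h : h[K] ⊆ U}` for `K` compact and `U` open. -/
instance homeoCO {X : Type*} [TopologicalSpace X] : TopologicalSpace (X ≃ₜ X) :=
  TopologicalSpace.generateFrom
    {S : Set (X ≃ₜ X) | ∃ K U : Set X, IsCompact K ∧ IsOpen U ∧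
      S = {h : X ≃ₜ X | ∀ x ∈ K, h x ∈ U}}

/-- In a compact Hausdorff totally disconnected space, a compact set inside an open
set is contained in a clopen set inside the open set. -/
lemma exists_isClopen_between {X : Type*} [TopologicalSpace X] [CompactSpace X] [T2Space X]
    [TotallyDisconnectedSpace X] {K U : Set X} (hK : IsCompact K) (hU : IsOpen U)
    (hKU : K ⊆ U) : ∃ V : Set X, IsClopen V ∧ K ⊆ V ∧ V ⊆ U := by
  have h : ∀ x ∈ K, ∃ V : Set X, IsClopen V ∧ x ∈ V ∧ V ⊆ U := fun x hx =>
    compact_exists_isClopen_in_isOpen hU (hKU hx)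
  choose! V hVclopen hVmem hVsub using h
  obtain ⟨t, ht, hcover⟩ := hK.elim_nhds_subcover V
    (fun x hx => (hVclopen x hx).2.mem_nhds (hVmem x hx))
  refine ⟨⋃ x ∈ t, V x, ?_, hcover, ?_⟩
  · exact (Set.Finite.isClopen_biUnion t.finite_toSet fun x hx => hVclopen x (ht x hx))
  · exact Set.iUnion₂_subset fun x hx => hVsub x (ht x hx)

lemma image_eq_iff {X : Type*} [TopologicalSpace X] (h : X ≃ₜ X) (A B : Set X) :
    ⇑h '' A = B ↔ (∀ x ∈ A, h x ∈ B) ∧ (∀ x ∈ Aᶜ, h x ∈ Bᶜ) := by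
  constructor
  · rintro rfl
    refine ⟨fun x hx => mem_image_of_mem _ hx, fun x hx hmem => ?_⟩
    obtain ⟨y, hy, hxy⟩ := hmem
    exact hx (h.injective hxy ▸ hy)
  · rintro ⟨h1, h2⟩
    apply Set.Subset.antisymm
    · rintro _ ⟨x, hx, rfl⟩; exact h1 x hx
    · intro b hb
      by_cases hm : h.symm b ∈ A
      · exact ⟨h.symm b, hm, h.apply_symm_apply b⟩
      · exact absurd (h.apply_symm_apply b ▸ h2 _ hm) (fun hc => hc hb)

/-- For a zero-dimensional compact Hausdorff space `X`, the family
`{⟨A,B⟩ : A, B clopen}`, where `⟨A,B⟩ = {h : h[A] = B}`, is a subbasis for the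
compact-open topology on `H(X)`. -/
theorem stmt_0 (X : Type*) [TopologicalSpace X] [CompactSpace X] [T2Space X]
    [TotallyDisconnectedSpace X] :
    (homeoCO : TopologicalSpace (X ≃ₜ X)) =
      TopologicalSpace.generateFrom
        {S : Set (X ≃ₜ X) | ∃ A B : Set X, IsClopen A ∧ IsClopen B ∧
          S = {h : X ≃ₜ X | ⇑h '' A = B}} := by
  apply le_antisymm
  · -- homeoCO ≤ generateFrom clopen: each ⟨A,B⟩ is open in homeoCO
    apply le_generateFrom
    rintro S ⟨A, B, hA, hB, rfl⟩
    have : {h : X ≃ₜ X | ⇑h '' A = B} =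
        {h : X ≃ₜ X | ∀ x ∈ A, h x ∈ B} ∩ {h : X ≃ₜ X | ∀ x ∈ Aᶜ, h x ∈ Bᶜ} := by
      ext h
      simpa using image_eq_iff h A B
    rw [this]
    exact IsOpen.inter
      (isOpen_generateFrom_of_mem ⟨A, B, hA.isClosed.isCompact, hB.isOpen, rfl⟩)
      (isOpen_generateFrom_of_mem ⟨Aᶜ, Bᶜ, hA.compl.isClosed.isCompact, hB.compl.isOpen, rfl⟩)
  · -- generateFrom clopen ≤ homeoCO: each V(K,U) is open in generateFrom clopen
    apply le_generateFrom
    rintro S ⟨K, U, hK, hU, rfl⟩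
    set gens := {S : Set (X ≃ₜ X) | ∃ A B : Set X, IsClopen A ∧ IsClopen B ∧
      S = {h : X ≃ₜ X | ⇑h '' A = B}} with hgens
    have key : ∀ h : X ≃ₜ X, (∀ x ∈ K, h x ∈ U) → ∃ T, T ∈ gens ∧ h ∈ T ∧
        T ⊆ {g : X ≃ₜ X | ∀ x ∈ K, g x ∈ U} := by
      intro h hh
      have hKU : ⇑h '' K ⊆ U := by rintro _ ⟨x, hx, rfl⟩; exact hh x hx
      obtain ⟨A, hA, hKA, hAU⟩ := exists_isClopen_between (hK.image h.continuous) hU hKU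
      refine ⟨{g : X ≃ₜ X | ⇑g '' (⇑h ⁻¹' A) = A},
        ⟨⇑h ⁻¹' A, A, hA.preimage h.continuous, hA, rfl⟩,
        Set.image_preimage_eq A h.surjective, ?_⟩
      intro g hg x hx
      exact hAU (hg ▸ Set.mem_image_of_mem g (show h x ∈ A from hKA ⟨x, hx, rfl⟩))
    have hS : {h : X ≃ₜ X | ∀ x ∈ K, h x ∈ U} =
        ⋃₀ {T | T ∈ gens ∧ T ⊆ {h : X ≃ₜ X | ∀ x ∈ K, h x ∈ U}} := by
      apply Set.Subset.antisymm
      · intro h hh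
        obtain ⟨T, hT, hhT, hTS⟩ := key h hh
        exact ⟨T, ⟨hT, hTS⟩, hhT⟩
      · rintro h ⟨T, ⟨-, hTS⟩, hhT⟩
        exact hTS hhT
    rw [hS]
    exact TopologicalSpace.GenerateOpen.sUnion _ fun T hT =>
      TopologicalSpace.GenerateOpen.basic T hT.1
end
end

section
/- Let X be a zero-dimensional compact Hausdorff space. Then the family of all sets of the form ⋂_{i<n} ⟨A_i,B_i⟩, where {A_i : i < n} is a partition of X into clopen sets and each B_i ⊆ X is clopen, is a basis for the compact-open topology on H(X). -/
open Set TopologicalSpace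

noncomputable section

open Filter Function Topology

/-! Each `⟨A, B⟩` with `A`, `B` clopen equals `V(A, B) ∩ V(Aᶜ, Bᶜ)`, so the given sets are open.
Conversely, if `g ∈ V(K, U)`, choose a clopen `C` with `K ⊆ C ⊆ g⁻¹(U)`: every `h` that maps each
block `A` of a clopen partition refining `{C, Cᶜ}` onto `g[A]` lies in `V(K, U)`. Clopen partitions
are the fibres of discrete quotients of `X`, and finitely many discrete quotients have a common
refinement, which takes care of finite intersections of subbasic sets. -/

theorem Function.Bijective.image_eq_iff_mapsTo_and_mapsTo_compl {α β : Type*} {f : α → β}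
    (hf : f.Bijective) {s : Set α} {t : Set β} :
    f '' s = t ↔ MapsTo f s t ∧ MapsTo f sᶜ tᶜ := by
  rw [image_eq_iff_surjOn_mapsTo]
  refine ⟨fun ⟨hsurj, hmaps⟩ => ⟨hmaps, hsurj.mapsTo_compl hf.1⟩, fun ⟨hmaps, hcompl⟩ => ⟨?_, hmaps⟩⟩
  simpa using hcompl.surjOn_compl hf.2

section HomeoSpace

variable {X : Type*} [TopologicalSpace X]

theorem isOpen_setOf_mapsTo {K U : Set X} (hK : IsCompact K) (hU : IsOpen U) :
    IsOpen {h : X ≃ₜ X | MapsTo h K U} :=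
  GenerateOpen.basic _ ⟨K, U, hK, hU, rfl⟩

theorem isOpen_setOf_image_eq [CompactSpace X] {A B : Set X} (hA : IsClopen A) (hB : IsClopen B) :
    IsOpen {h : X ≃ₜ X | h '' A = B} := by
  simp only [Homeomorph.bijective _ |>.image_eq_iff_mapsTo_and_mapsTo_compl, ofPred_and]
  exact (isOpen_setOf_mapsTo hA.isClosed.isCompact hB.isOpen).inter
    (isOpen_setOf_mapsTo hA.compl.isClosed.isCompact hB.compl.isOpen)

def clopenPartitionSets (X : Type*) [TopologicalSpace X] : Set (Set (X ≃ₜ X)) :=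
  {S | ∃ (n : ℕ) (A B : Fin n → Set X),
    (∀ i, IsClopen (A i) ∧ (A i).Nonempty) ∧
    (∀ i j, i ≠ j → Disjoint (A i) (A j)) ∧
    (⋃ i, A i) = univ ∧
    (∀ i, IsClopen (B i)) ∧
    S = ⋂ i, {h : X ≃ₜ X | ⇑h '' A i = B i}}

theorem iInter_setOf_image_eq_mem_clopenPartitionSets {ι : Type*} [Finite ι] {A B : ι → Set X}
    (hA : ∀ i, IsClopen (A i) ∧ (A i).Nonempty) (hdisj : Pairwise (Disjoint on A))
    (hcover : ⋃ i, A i = univ) (hB : ∀ i, IsClopen (B i)) :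
    ⋂ i, {h : X ≃ₜ X | h '' A i = B i} ∈ clopenPartitionSets X := by
  set e := (Finite.equivFin ι).symm
  refine ⟨Nat.card ι, A ∘ e, B ∘ e, fun i => hA (e i), fun i j hij => hdisj (e.injective.ne hij),
    ?_, fun i => hB (e i), ?_⟩
  · exact (e.surjective.iUnion_comp A).trans hcover
  · exact (e.surjective.iInter_comp fun i => {h : X ≃ₜ X | h '' A i = B i}).symm

theorem DiscreteQuotient.iInter_image_fiber_mem_clopenPartitionSets [CompactSpace X]
    (Q : DiscreteQuotient X) (g : X ≃ₜ X) :
    ⋂ q, {h : X ≃ₜ X | h '' (Q.proj ⁻¹' {q}) = g '' (Q.proj ⁻¹' {q})} ∈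
      clopenPartitionSets X :=
  iInter_setOf_image_eq_mem_clopenPartitionSets
    (fun q => ⟨Q.isClopen_preimage _, (singleton_nonempty q).preimage Q.proj_surjective⟩)
    (fun _ _ hqq' => (disjoint_singleton.2 hqq').preimage Q.proj)
    (by rw [← preimage_iUnion, iUnion_of_singleton, preimage_univ])
    fun _ => ⟨g.isClosed_image.2 (Q.isClosed_preimage _), g.isOpen_image.2 (Q.isOpen_preimage _)⟩

/-- The left coset of `g` modulo the homeomorphisms preserving every fibre of `Q`. -/
def DiscreteQuotient.fiberCoset (Q : DiscreteQuotient X) (g : X ≃ₜ X) : Set (X ≃ₜ X) :=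
  {h | ∀ x, Q.proj (g.symm (h x)) = Q.proj x}

theorem DiscreteQuotient.fiberCoset_mono {Q Q' : DiscreteQuotient X} (hQ : Q ≤ Q')
    (g : X ≃ₜ X) : Q.fiberCoset g ⊆ Q'.fiberCoset g := fun h hh x => by
  rw [← ofLE_proj hQ, hh x, ofLE_proj]

theorem DiscreteQuotient.iInter_image_fiber_subset_fiberCoset (Q : DiscreteQuotient X)
    (g : X ≃ₜ X) :
    ⋂ q, {h : X ≃ₜ X | h '' (Q.proj ⁻¹' {q}) = g '' (Q.proj ⁻¹' {q})} ⊆ Q.fiberCoset g := by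
  intro h hh x
  obtain ⟨y, hy, hxy⟩ : h x ∈ g '' (Q.proj ⁻¹' {Q.proj x}) :=
    (mem_iInter.1 hh (Q.proj x)) ▸ mem_image_of_mem h rfl
  rw [← hxy, Homeomorph.symm_apply_apply]
  exact hy

end HomeoSpace

section ZeroDimensional

variable {X : Type*} [TopologicalSpace X] [CompactSpace X] [T2Space X] [TotallyDisconnectedSpace X]

theorem exists_fiberCoset_subset_setOf_mapsTo {K U : Set X} (hK : IsCompact K) (hU : IsOpen U)
    {g : X ≃ₜ X} (hg : MapsTo g K U) :
    ∃ Q : DiscreteQuotient X, Q.fiberCoset g ⊆ {h | MapsTo h K U} := by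
  obtain ⟨C, hC, hKC, hCU⟩ :=
    exists_clopen_of_closed_subset_open hK.isClosed (hU.preimage g.continuous) hg
  refine ⟨.ofIsClopen hC, fun h hh x hx => ?_⟩
  have hC' : g.symm (h x) ∈ C := (Quotient.eq''.1 (hh x)).2 (hKC hx)
  simpa using hCU hC'

theorem exists_fiberCoset_subset_of_mem_nhds {g : X ≃ₜ X} {u : Set (X ≃ₜ X)} (hu : u ∈ 𝓝 g) :
    ∃ Q : DiscreteQuotient X, Q.fiberCoset g ⊆ u := by
  have hle : ⨅ Q : DiscreteQuotient X, 𝓟 (Q.fiberCoset g) ≤ 𝓝 g := by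
    rw [nhds_generateFrom]
    refine le_iInf₂ ?_
    rintro _ ⟨hgs, K, U, hK, hU, rfl⟩
    obtain ⟨Q, hQ⟩ := exists_fiberCoset_subset_setOf_mapsTo hK hU hgs
    exact iInf_le_of_le Q (principal_mono.2 hQ)
  have hdir : Directed (· ≥ ·) fun Q : DiscreteQuotient X => 𝓟 (Q.fiberCoset g) :=
    Monotone.directed_ge fun Q Q' hQ => principal_mono.2 (Q.fiberCoset_mono hQ g)
  simpa only [mem_principal] using (mem_iInf_of_directed hdir u).1 (hle hu)

end ZeroDimensional

/-- For a zero-dimensional compact Hausdorff space `X`, the family of sets of the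
form `⋂_{i<n} ⟨A_i,B_i⟩`, where `{A_i : i < n}` is a partition of `X` into clopen
sets and each `B_i` is clopen (and `⟨A,B⟩ = {h : h[A] = B}`), is a basis for the
compact-open topology on `H(X)`. -/
theorem stmt_1 (X : Type*) [TopologicalSpace X] [CompactSpace X] [T2Space X]
    [TotallyDisconnectedSpace X] :
    TopologicalSpace.IsTopologicalBasis
      {S : Set (X ≃ₜ X) | ∃ (n : ℕ) (A B : Fin n → Set X),
        (∀ i, IsClopen (A i) ∧ (A i).Nonempty) ∧
        (∀ i j, i ≠ j → Disjoint (A i) (A j)) ∧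
        (⋃ i, A i) = univ ∧
        (∀ i, IsClopen (B i)) ∧
        S = ⋂ i, {h : X ≃ₜ X | ⇑h '' A i = B i}} := by
  refine isTopologicalBasis_of_isOpen_of_nhds ?_ fun g u hgu hu => ?_
  · rintro _ ⟨n, A, B, hA, -, -, hB, rfl⟩
    exact isOpen_iInter_of_finite fun i => isOpen_setOf_image_eq (hA i).1 (hB i)
  · obtain ⟨Q, hQ⟩ := exists_fiberCoset_subset_of_mem_nhds (hu.mem_nhds hgu)
    exact ⟨_, Q.iInter_image_fiber_mem_clopenPartitionSets g, mem_iInter.2 fun _ => rfl,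
      (Q.iInter_image_fiber_subset_fiberCoset g).trans hQ⟩
end
end

section
/- Let X be a zero-dimensional compact Hausdorff space. Then the family of all sets ⟨𝒱,G⟩, where 𝒱 is a partition of X into clopen sets and G is a directed graph with vertex set 𝒱, is a basis for the compact-open topology on H(X). -/
open Set TopologicalSpace

noncomputable section

/-- `𝒱` is a partition of `X` into (nonempty) clopen sets. -/
def IsClopenPartition {X : Type*} [TopologicalSpace X] (𝒱 : Set (Set X)) : Prop :=
  (∀ A ∈ 𝒱, IsClopen A ∧ A.Nonempty) ∧ 𝒱.Pairwise Disjoint ∧ ⋃₀ 𝒱 = univ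

section Aux

variable {X : Type*} [TopologicalSpace X]

lemma IsClopenPartition.mem_exists {𝒱 : Set (Set X)} (h : IsClopenPartition 𝒱) (x : X) :
    ∃ A ∈ 𝒱, x ∈ A :=
  Set.mem_sUnion.mp (h.2.2 ▸ mem_univ x : x ∈ ⋃₀ 𝒱)

lemma IsClopenPartition.eq_of_nonempty {𝒱 : Set (Set X)} (h : IsClopenPartition 𝒱) {A B : Set X}
    (hA : A ∈ 𝒱) (hB : B ∈ 𝒱) (hne : (A ∩ B).Nonempty) : A = B := by
  by_contra hAB
  obtain ⟨x, hx1, hx2⟩ := hne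
  exact Set.disjoint_left.mp (h.2.1 hA hB hAB) hx1 hx2

lemma IsClopenPartition.finite [CompactSpace X] {𝒱 : Set (Set X)} (h : IsClopenPartition 𝒱) :
    𝒱.Finite := by
  obtain ⟨t, ht𝒱, htfin, hcov⟩ := isCompact_univ.elim_finite_subcover_image (b := 𝒱)
    (c := id) (fun A hA => (h.1 A hA).1.2)
    (fun x _ => by
      obtain ⟨A, hA, hxA⟩ := h.mem_exists x
      exact mem_iUnion₂.mpr ⟨A, hA, hxA⟩)
  refine htfin.subset fun A hA => ?_
  obtain ⟨x, hx⟩ := (h.1 A hA).2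
  obtain ⟨B, hBt, hxB⟩ := mem_iUnion₂.mp (hcov (mem_univ x))
  exact (h.eq_of_nonempty hA (ht𝒱 hBt) ⟨x, hx, hxB⟩) ▸ hBt

lemma exists_clopen_between [CompactSpace X] [T2Space X] [TotallyDisconnectedSpace X]
    {K U : Set X} (hK : IsCompact K) (hU : IsOpen U) (hKU : K ⊆ U) :
    ∃ C, IsClopen C ∧ K ⊆ C ∧ C ⊆ U := by
  choose V hV hxV hVU using fun x : K => compact_exists_isClopen_in_isOpen hU (hKU x.2)
  obtain ⟨t, ht⟩ := hK.elim_finite_subcover (fun x : K => V x) (fun x => (hV x).2)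
    (fun x hx => mem_iUnion.mpr ⟨⟨x, hx⟩, hxV _⟩)
  exact ⟨⋃ x ∈ t, V x, isClopen_biUnion_finset (fun i _ => hV i), ht,
    iUnion₂_subset fun i _ => hVU i⟩

lemma atoms_partition {D C : Set X} (hD : IsClopen D) (hC : IsClopen C) :
    IsClopenPartition {A : Set X | A.Nonempty ∧
      ((A = D ∩ C) ∨ (A = D ∩ Cᶜ) ∨ (A = Dᶜ ∩ C) ∨ (A = Dᶜ ∩ Cᶜ))} := by
  refine ⟨?_, ?_, ?_⟩
  · rintro A ⟨hne, hcase⟩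
    refine ⟨?_, hne⟩
    rcases hcase with rfl | rfl | rfl | rfl
    exacts [hD.inter hC, hD.inter hC.compl, hD.compl.inter hC, hD.compl.inter hC.compl]
  · intro A hA B hB hAB
    by_contra hdis
    obtain ⟨x, hxA, hxB⟩ := Set.not_disjoint_iff.mp hdis
    apply hAB
    rcases hA.2 with rfl | rfl | rfl | rfl <;> rcases hB.2 with rfl | rfl | rfl | rfl <;>
      simp_all
  · ext x
    simp only [mem_univ, iff_true, mem_sUnion]
    by_cases hxD : x ∈ D <;> by_cases hxC : x ∈ C
    · exact ⟨D ∩ C, ⟨⟨x, hxD, hxC⟩, Or.inl rfl⟩, hxD, hxC⟩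
    · exact ⟨D ∩ Cᶜ, ⟨⟨x, hxD, hxC⟩, Or.inr (Or.inl rfl)⟩, hxD, hxC⟩
    · exact ⟨Dᶜ ∩ C, ⟨⟨x, hxD, hxC⟩, Or.inr (Or.inr (Or.inl rfl))⟩, hxD, hxC⟩
    · exact ⟨Dᶜ ∩ Cᶜ, ⟨⟨x, hxD, hxC⟩, Or.inr (Or.inr (Or.inr rfl))⟩, hxD, hxC⟩

lemma inter_partition {𝒱₁ 𝒱₂ : Set (Set X)} (h₁ : IsClopenPartition 𝒱₁)
    (h₂ : IsClopenPartition 𝒱₂) :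
    IsClopenPartition {W : Set X | W.Nonempty ∧ ∃ A ∈ 𝒱₁, ∃ B ∈ 𝒱₂, W = A ∩ B} := by
  refine ⟨?_, ?_, ?_⟩
  · rintro W ⟨hne, A, hA, B, hB, rfl⟩
    exact ⟨(h₁.1 A hA).1.inter (h₂.1 B hB).1, hne⟩
  · rintro W ⟨hne, A, hA, B, hB, rfl⟩ W' ⟨hne', A', hA', B', hB', rfl⟩ hWW'
    by_contra hdis
    obtain ⟨x, hx, hx'⟩ := Set.not_disjoint_iff.mp hdis
    have eA : A = A' := h₁.eq_of_nonempty hA hA' ⟨x, hx.1, hx'.1⟩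
    have eB : B = B' := h₂.eq_of_nonempty hB hB' ⟨x, hx.2, hx'.2⟩
    exact hWW' (by rw [eA, eB])
  · ext x
    simp only [mem_univ, iff_true, mem_sUnion]
    obtain ⟨A, hA, hxA⟩ := h₁.mem_exists x
    obtain ⟨B, hB, hxB⟩ := h₂.mem_exists x
    exact ⟨A ∩ B, ⟨⟨x, hxA, hxB⟩, A, hA, B, hB, rfl⟩, hxA, hxB⟩

/-- Transfer of the "hit" relation along a refinement. -/
lemma refine_iff {𝒱 𝒲 : Set (Set X)} (h𝒲 : IsClopenPartition 𝒲)
    (href : ∀ W ∈ 𝒲, ∀ A ∈ 𝒱, (W ∩ A).Nonempty → W ⊆ A)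
    (g : X ≃ₜ X) {A B : Set X} (hA : A ∈ 𝒱) (hB : B ∈ 𝒱) :
    ((⇑g '' A) ∩ B).Nonempty ↔
      ∃ W ∈ 𝒲, ∃ W' ∈ 𝒲, W ⊆ A ∧ W' ⊆ B ∧ ((⇑g '' W) ∩ W').Nonempty := by
  constructor
  · rintro ⟨y, ⟨x, hxA, rfl⟩, hyB⟩
    obtain ⟨W, hW, hxW⟩ := h𝒲.mem_exists x
    obtain ⟨W', hW', hyW'⟩ := h𝒲.mem_exists (g x)
    exact ⟨W, hW, W', hW', href W hW A hA ⟨x, hxW, hxA⟩, href W' hW' B hB ⟨g x, hyW', hyB⟩,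
      ⟨g x, ⟨x, hxW, rfl⟩, hyW'⟩⟩
  · rintro ⟨W, hW, W', hW', hWA, hW'B, y, ⟨x, hxW, rfl⟩, hyW'⟩
    exact ⟨g x, ⟨x, hWA hxW, rfl⟩, hW'B hyW'⟩

end Aux

/-- For a zero-dimensional compact Hausdorff space `X`, the family of all sets
`⟨𝒱,G⟩ = {h : Hit(𝒱,h) = G}`, where `𝒱` is a partition of `X` into clopen sets and
`G` is a directed graph with vertex set `𝒱` (here `Hit(𝒱,h)` has an edge `A → B`
iff `h[A] ∩ B ≠ ∅`), is a basis for the compact-open topology on `H(X)`. -/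
theorem stmt_2 (X : Type*) [TopologicalSpace X] [CompactSpace X] [T2Space X]
    [TotallyDisconnectedSpace X] :
    TopologicalSpace.IsTopologicalBasis
      {S : Set (X ≃ₜ X) | ∃ (𝒱 : Set (Set X)) (G : Set X → Set X → Prop),
        IsClopenPartition 𝒱 ∧
        S = {h : X ≃ₜ X | ∀ A ∈ 𝒱, ∀ B ∈ 𝒱,
          (((⇑h '' A) ∩ B).Nonempty ↔ G A B)}} := by
  classical
  apply isTopologicalBasis_of_isOpen_of_nhds
  · -- each ⟨𝒱,G⟩ is open
    rintro S ⟨𝒱, G, hp, rfl⟩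
    rw [isOpen_iff_forall_mem_open]
    intro h hh
    simp only [mem_setOf_eq] at hh
    refine ⟨(⋂ A ∈ 𝒱, {h' : X ≃ₜ X | ∀ x ∈ A, h' x ∈ ⋃₀ {B | B ∈ 𝒱 ∧ G A B}}) ∩
        (⋂ A ∈ 𝒱, ⋂ B ∈ 𝒱,
          if G A B then {h' : X ≃ₜ X | ((⇑h' '' A) ∩ B).Nonempty} else univ), ?_, ?_, ?_⟩
    · -- contained in ⟨𝒱,G⟩
      rintro h' ⟨h1, h2⟩
      simp only [mem_iInter, mem_setOf_eq] at h1 h2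
      intro A hA B hB
      constructor
      · rintro ⟨y, ⟨x, hxA, rfl⟩, hyB⟩
        obtain ⟨B', ⟨hB', hG⟩, hyB'⟩ := h1 A hA x hxA
        rwa [hp.eq_of_nonempty hB' hB ⟨h' x, hyB', hyB⟩] at hG
      · intro hG
        have := h2 A hA B hB
        rwa [if_pos hG] at this
    · -- open
      refine IsOpen.inter ?_ ?_
      · refine (hp.finite.isOpen_biInter fun A hA => ?_)
        have hUo : IsOpen (⋃₀ {B | B ∈ 𝒱 ∧ G A B}) :=
          isOpen_sUnion fun B hB => (hp.1 B hB.1).1.2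
        have hAc : IsCompact A := (hp.1 A hA).1.1.isCompact
        exact TopologicalSpace.GenerateOpen.basic _ ⟨A, _, hAc, hUo, rfl⟩
      · refine hp.finite.isOpen_biInter fun A hA => hp.finite.isOpen_biInter fun B hB => ?_
        split_ifs with hG
        · have : {h' : X ≃ₜ X | ((⇑h' '' A) ∩ B).Nonempty} =
              ⋃ x ∈ A, {h' : X ≃ₜ X | ∀ y ∈ ({x} : Set X), h' y ∈ B} := by
            ext h'
            simp only [mem_setOf_eq, mem_iUnion, mem_singleton_iff]
            constructor
            · rintro ⟨y, ⟨x, hxA, rfl⟩, hyB⟩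
              exact ⟨x, hxA, fun y hy => hy ▸ hyB⟩
            · rintro ⟨x, hxA, hx⟩
              exact ⟨h' x, ⟨x, hxA, rfl⟩, hx x rfl⟩
          rw [this]
          exact isOpen_biUnion fun x _ =>
            TopologicalSpace.GenerateOpen.basic _
              ⟨{x}, B, isCompact_singleton, (hp.1 B hB).1.2, rfl⟩
        · exact isOpen_univ
    · -- contains h
      constructor
      · simp only [mem_iInter, mem_setOf_eq]
        intro A hA x hxA
        obtain ⟨B, hB, hxB⟩ := hp.mem_exists (h x)
        exact ⟨B, ⟨hB, (hh A hA B hB).mp ⟨h x, ⟨x, hxA, rfl⟩, hxB⟩⟩, hxB⟩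
      · simp only [mem_iInter]
        intro A hA B hB
        split_ifs with hG
        · exact (hh A hA B hB).mpr hG
        · exact mem_univ _
  · -- basis sets around each point inside each open set
    intro h u hmem hu
    have hu' : TopologicalSpace.GenerateOpen
        {S : Set (X ≃ₜ X) | ∃ K U : Set X, IsCompact K ∧ IsOpen U ∧
          S = {h : X ≃ₜ X | ∀ x ∈ K, h x ∈ U}} u := hu
    clear hu
    induction hu' generalizing h with
    | basic s hs =>
      obtain ⟨K, U, hK, hU, rfl⟩ := hs
      have hh : ∀ x ∈ K, h x ∈ U := hmem
      have hKU' : ⇑h '' K ⊆ U := by rintro _ ⟨x, hx, rfl⟩; exact hh x hx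
      obtain ⟨C, hC, hC1, hC2⟩ :=
        exists_clopen_between (hK.image h.continuous) hU hKU'
      set D := ⇑h ⁻¹' C with hDdef
      have hDclopen : IsClopen D := ⟨hC.1.preimage h.continuous, hC.2.preimage h.continuous⟩
      have hKD : K ⊆ D := fun x hx => hC1 ⟨x, hx, rfl⟩
      set 𝒱 := {A : Set X | A.Nonempty ∧
        ((A = D ∩ C) ∨ (A = D ∩ Cᶜ) ∨ (A = Dᶜ ∩ C) ∨ (A = Dᶜ ∩ Cᶜ))} with h𝒱def
      have hpart : IsClopenPartition 𝒱 := atoms_partition hDclopen hC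
      refine ⟨{h' : X ≃ₜ X | ∀ A ∈ 𝒱, ∀ B ∈ 𝒱,
          (((⇑h' '' A) ∩ B).Nonempty ↔ ((⇑h '' A) ∩ B).Nonempty)},
        ⟨𝒱, fun A B => ((⇑h '' A) ∩ B).Nonempty, hpart, rfl⟩,
        fun A _ B _ => Iff.rfl, ?_⟩
      intro h' hh' x hxK
      simp only [mem_setOf_eq] at hh'
      -- the key: images of atoms inside D can't meet atoms inside Cᶜ
      have main : ∀ W ∈ 𝒱, W ⊆ D → ∀ W' ∈ 𝒱, W' ⊆ Cᶜ → ¬((⇑h' '' W) ∩ W').Nonempty := by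
        intro W hW hWD W' hW' hW'C hne
        obtain ⟨z, ⟨w, hwW, rfl⟩, hzW'⟩ := (hh' W hW W' hW').mp hne
        exact hW'C hzW' (hWD hwW)
      -- show h' x ∈ U
      have hxD : x ∈ D := hKD hxK
      by_cases hyC : h' x ∈ C
      · exact hC2 hyC
      · exfalso
        -- atom of x
        have hW : ∃ W ∈ 𝒱, x ∈ W ∧ W ⊆ D := by
          by_cases hxC : x ∈ C
          · exact ⟨D ∩ C, ⟨⟨x, hxD, hxC⟩, Or.inl rfl⟩, ⟨hxD, hxC⟩, inter_subset_left⟩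
          · exact ⟨D ∩ Cᶜ, ⟨⟨x, hxD, hxC⟩, Or.inr (Or.inl rfl)⟩, ⟨hxD, hxC⟩,
              inter_subset_left⟩
        have hW' : ∃ W' ∈ 𝒱, h' x ∈ W' ∧ W' ⊆ Cᶜ := by
          by_cases hyD : h' x ∈ D
          · exact ⟨D ∩ Cᶜ, ⟨⟨h' x, hyD, hyC⟩, Or.inr (Or.inl rfl)⟩, ⟨hyD, hyC⟩,
              inter_subset_right⟩
          · exact ⟨Dᶜ ∩ Cᶜ, ⟨⟨h' x, hyD, hyC⟩, Or.inr (Or.inr (Or.inr rfl))⟩, ⟨hyD, hyC⟩,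
              inter_subset_right⟩
        obtain ⟨W, hWmem, hxW, hWD⟩ := hW
        obtain ⟨W', hW'mem, hyW', hW'C⟩ := hW'
        exact main W hWmem hWD W' hW'mem hW'C ⟨h' x, ⟨x, hxW, rfl⟩, hyW'⟩
    | univ =>
      rcases isEmpty_or_nonempty X with hX | hX
      · refine ⟨univ, ⟨∅, fun _ _ => True, ?_, ?_⟩, mem_univ h, subset_univ _⟩
        · exact ⟨fun A hA => absurd hA (notMem_empty A), Set.pairwise_empty _,
            by rw [Set.sUnion_empty]; exact (Set.univ_eq_empty_iff.mpr hX).symm⟩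
        · ext h'; simp
      · refine ⟨{h' : X ≃ₜ X | ∀ A ∈ ({univ} : Set (Set X)), ∀ B ∈ ({univ} : Set (Set X)),
            (((⇑h' '' A) ∩ B).Nonempty ↔ True)},
          ⟨{univ}, fun _ _ => True, ?_, rfl⟩, ?_, subset_univ _⟩
        · refine ⟨?_, Set.pairwise_singleton _ _, by rw [Set.sUnion_singleton]⟩
          intro A hA
          rw [mem_singleton_iff] at hA
          subst hA
          exact ⟨isClopen_univ, univ_nonempty⟩
        · intro A hA B hB
          rw [mem_singleton_iff] at hA hB
          subst hA; subst hB
          obtain ⟨x⟩ := hX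
          exact iff_of_true ⟨h x, ⟨x, mem_univ x, rfl⟩, mem_univ _⟩ trivial
    | inter u₁ u₂ hu₁ hu₂ ih₁ ih₂ =>
      obtain ⟨v₁, hv₁mem, hv₁h, hv₁sub⟩ := ih₁ h hmem.1
      obtain ⟨v₂, hv₂mem, hv₂h, hv₂sub⟩ := ih₂ h hmem.2
      obtain ⟨𝒱₁, G₁, hp₁, rfl⟩ := hv₁mem
      obtain ⟨𝒱₂, G₂, hp₂, rfl⟩ := hv₂mem
      set 𝒲 := {W : Set X | W.Nonempty ∧ ∃ A ∈ 𝒱₁, ∃ B ∈ 𝒱₂, W = A ∩ B} with h𝒲def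
      have hp𝒲 : IsClopenPartition 𝒲 := inter_partition hp₁ hp₂
      have href₁ : ∀ W ∈ 𝒲, ∀ A ∈ 𝒱₁, (W ∩ A).Nonempty → W ⊆ A := by
        rintro W ⟨hne, A', hA', B', hB', rfl⟩ A hA ⟨x, hx1, hx2⟩
        have : A' = A := hp₁.eq_of_nonempty hA' hA ⟨x, hx1.1, hx2⟩
        exact this ▸ inter_subset_left
      have href₂ : ∀ W ∈ 𝒲, ∀ A ∈ 𝒱₂, (W ∩ A).Nonempty → W ⊆ A := by
        rintro W ⟨hne, A', hA', B', hB', rfl⟩ A hA ⟨x, hx1, hx2⟩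
        have : B' = A := hp₂.eq_of_nonempty hB' hA ⟨x, hx1.2, hx2⟩
        exact this ▸ inter_subset_right
      refine ⟨{h' : X ≃ₜ X | ∀ A ∈ 𝒲, ∀ B ∈ 𝒲,
          (((⇑h' '' A) ∩ B).Nonempty ↔ ((⇑h '' A) ∩ B).Nonempty)},
        ⟨𝒲, fun A B => ((⇑h '' A) ∩ B).Nonempty, hp𝒲, rfl⟩,
        fun A _ B _ => Iff.rfl, ?_⟩
      intro h' hh'
      simp only [mem_setOf_eq] at hh'
      have transfer : ∀ (𝒱 : Set (Set X)),
          (∀ W ∈ 𝒲, ∀ A ∈ 𝒱, (W ∩ A).Nonempty → W ⊆ A) →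
          ∀ A ∈ 𝒱, ∀ B ∈ 𝒱,
            (((⇑h' '' A) ∩ B).Nonempty ↔ ((⇑h '' A) ∩ B).Nonempty) := by
        intro 𝒱 href A hA B hB
        rw [refine_iff hp𝒲 href h' hA hB, refine_iff hp𝒲 href h hA hB]
        constructor <;> rintro ⟨W, hW, W', hW', hWA, hW'B, hne⟩
        · exact ⟨W, hW, W', hW', hWA, hW'B, (hh' W hW W' hW').mp hne⟩
        · exact ⟨W, hW, W', hW', hWA, hW'B, (hh' W hW W' hW').mpr hne⟩
      constructor
      · apply hv₁sub
        intro A hA B hB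
        rw [transfer 𝒱₁ href₁ A hA B hB]
        exact hv₁h A hA B hB
      · apply hv₂sub
        intro A hA B hB
        rw [transfer 𝒱₂ href₂ A hA B hB]
        exact hv₂h A hA B hB
    | sUnion S hS ih =>
      obtain ⟨t, ht, hht⟩ := hmem
      obtain ⟨v, hv, hvh, hvsub⟩ := ih t ht h hht
      exact ⟨v, hv, hvh, hvsub.trans (subset_sUnion_of_mem ht)⟩
end
end

section
/- Let X be a compact Hausdorff space. A homeomorphism h ∈ H(X) is chain transitive if and only if for every open set U ⊆ X with U ≠ ∅ and U ≠ X, we have h[cl(U)] ⊄ U (where cl(U) is the closure of U). -/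
/-!
If `h[cl U] ⊆ U` for a nonempty open `U ≠ X`, the cover `{U, X \ h[cl U]}` admits no chain
leaving `U`, so `h` is not chain transitive. Conversely, for an open cover `𝒰` the set `A` of
points reachable from `a` by `𝒰`-chains is open, contains `h a`, and satisfies
`h[cl A] ⊆ A` by continuity of `h`; hence it is all of `X`.
-/

open Set TopologicalSpace

noncomputable section

/-- `h` is chain transitive: for all points `a, b` and every open cover `𝒰` of the
space, there is a `𝒰`-chain `x_0 = a, x_1, …, x_n = b` (with `n ≥ 1`), i.e. for
each `i < n` there is `U ∈ 𝒰` with `h(x_i) ∈ U` and `x_{i+1} ∈ U`. -/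
def ChainTransitive {X : Type*} [TopologicalSpace X] (h : X → X) : Prop :=
  ∀ a b : X, ∀ 𝒰 : Set (Set X), (∀ U ∈ 𝒰, IsOpen U) → ⋃₀ 𝒰 = univ →
    ∃ n : ℕ, 1 ≤ n ∧ ∃ x : ℕ → X, x 0 = a ∧ x n = b ∧
      ∀ i < n, ∃ U ∈ 𝒰, h (x i) ∈ U ∧ x (i + 1) ∈ U

theorem Relation.transGen_iff_exists_seq {α : Type*} {r : α → α → Prop} {a b : α} :
    TransGen r a b ↔ ∃ n : ℕ, 1 ≤ n ∧ ∃ x : ℕ → α, x 0 = a ∧ x n = b ∧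
      ∀ i < n, r (x i) (x (i + 1)) := by
  constructor
  · intro hab
    induction hab with
    | single hab => exact ⟨1, le_rfl, fun i => if i = 0 then a else _, rfl, rfl, by simpa⟩
    | @tail c d _ hcd ih =>
      obtain ⟨n, hn, x, hx0, hxn, hx⟩ := ih
      refine ⟨n + 1, by omega, Function.update x (n + 1) d, ?_, by simp, fun i hi => ?_⟩
      · simp [hx0]
      · rcases Nat.lt_succ_iff_lt_or_eq.mp hi with hi | rfl
        · rw [Function.update_of_ne (by omega), Function.update_of_ne (by omega)]
          exact hx i hi
        · simpa [hxn] using hcd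
  · rintro ⟨n, hn, x, rfl, rfl, hx⟩
    exact (transGen_of_succ_of_lt (fun i j => r (x i) (x j))
      (fun i hi => by simpa using hx i hi.2) hn).lift x fun _ _ => id

section

variable {X : Type*} [TopologicalSpace X] {h : X → X} {𝒰 : Set (Set X)}

def ChainStep (h : X → X) (𝒰 : Set (Set X)) (x y : X) : Prop :=
  ∃ U ∈ 𝒰, h x ∈ U ∧ y ∈ U

theorem chainTransitive_iff_transGen :
    ChainTransitive h ↔ ∀ a b : X, ∀ 𝒰 : Set (Set X), (∀ U ∈ 𝒰, IsOpen U) → ⋃₀ 𝒰 = univ →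
      Relation.TransGen (ChainStep h 𝒰) a b := by
  simp only [ChainTransitive, Relation.transGen_iff_exists_seq, ChainStep]

theorem ChainTransitive.not_image_closure_subset (hct : ChainTransitive h) (hh : IsClosedMap h)
    {U : Set X} (hU : IsOpen U) (hne : U.Nonempty) (hU_ne_univ : U ≠ univ) :
    ¬h '' closure U ⊆ U := by
  intro hsub
  obtain ⟨a, ha⟩ := hne
  obtain ⟨b, hb⟩ := (ne_univ_iff_exists_notMem U).mp hU_ne_univ
  set 𝒰 : Set (Set X) := {U, (h '' closure U)ᶜ}
  have h𝒰_open : ∀ V ∈ 𝒰, IsOpen V := by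
    rintro V (rfl | rfl)
    exacts [hU, (hh _ isClosed_closure).isOpen_compl]
  have h𝒰_cover : ⋃₀ 𝒰 = univ :=
    eq_univ_of_forall fun y => (em (y ∈ U)).elim (fun hy => ⟨U, .inl rfl, hy⟩)
      fun hy => ⟨_, .inr rfl, fun hy' => hy (hsub hy')⟩
  have hstep : ∀ x y, x ∈ U → ChainStep h 𝒰 x y → y ∈ U := by
    rintro x y hx ⟨V, (rfl | rfl), hhx, hy⟩
    exacts [hy, (hhx ⟨x, subset_closure hx, rfl⟩).elim]
  have hreach : ∀ y, Relation.TransGen (ChainStep h 𝒰) a y → y ∈ U := by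
    intro y hy
    induction hy with
    | single hay => exact hstep _ _ ha hay
    | tail _ hcd ih => exact hstep _ _ ih hcd
  exact hb (hreach b (chainTransitive_iff_transGen.mp hct a b 𝒰 h𝒰_open h𝒰_cover))

theorem isOpen_setOf_transGen_chainStep (h𝒰_open : ∀ U ∈ 𝒰, IsOpen U) (a : X) :
    IsOpen {y | Relation.TransGen (ChainStep h 𝒰) a y} := by
  refine isOpen_iff_forall_mem_open.mpr fun y hy => ?_
  obtain ⟨w, haw, U, hU, hwU, hyU⟩ := Relation.TransGen.tail'_iff.mp hy
  exact ⟨U, fun z hz => Relation.TransGen.tail' haw ⟨U, hU, hwU, hz⟩, h𝒰_open U hU, hyU⟩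

theorem image_closure_subset_of_chainStep_mem (hh : Continuous h)
    (h𝒰_open : ∀ U ∈ 𝒰, IsOpen U) (h𝒰_cover : ⋃₀ 𝒰 = univ) {A : Set X}
    (hA : ∀ y ∈ A, ∀ z, ChainStep h 𝒰 y z → z ∈ A) : h '' closure A ⊆ A := by
  rintro _ ⟨z, hz, rfl⟩
  obtain ⟨U, hU, hzU⟩ := mem_sUnion.mp (h𝒰_cover ▸ mem_univ (h z))
  obtain ⟨y, hyU, hyA⟩ := mem_closure_iff.mp hz _ ((h𝒰_open U hU).preimage hh) hzU
  exact hA y hyA _ ⟨U, hU, hyU, hzU⟩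

theorem chainTransitive_of_forall_not_image_closure_subset (hh : Continuous h)
    (H : ∀ U : Set X, IsOpen U → U ≠ ∅ → U ≠ univ → ¬h '' closure U ⊆ U) :
    ChainTransitive h := by
  refine chainTransitive_iff_transGen.mpr fun a b 𝒰 h𝒰_open h𝒰_cover => ?_
  set A := {y | Relation.TransGen (ChainStep h 𝒰) a y}
  obtain ⟨U, hU, haU⟩ := mem_sUnion.mp (h𝒰_cover ▸ mem_univ (h a))
  have hA_ne : A ≠ ∅ := nonempty_iff_ne_empty.mp ⟨h a, .single ⟨U, hU, haU, haU⟩⟩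
  have hA_univ : A = univ := by
    by_contra hA
    exact H A (isOpen_setOf_transGen_chainStep h𝒰_open a) hA_ne hA
      (image_closure_subset_of_chainStep_mem hh h𝒰_open h𝒰_cover fun _ hy _ => hy.tail)
  exact (hA_univ ▸ mem_univ b : b ∈ A)

end

theorem stmt_5_general (X : Type*) [TopologicalSpace X]
    (h : X ≃ₜ X) :
    ChainTransitive ⇑h ↔
      ∀ U : Set X, IsOpen U → U ≠ ∅ → U ≠ univ → ¬(⇑h '' closure U ⊆ U) :=
  ⟨fun hct _ hU hne hU_ne_univ =>
    hct.not_image_closure_subset h.isClosedMap hU (nonempty_iff_ne_empty.mpr hne) hU_ne_univ,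
    chainTransitive_of_forall_not_image_closure_subset h.continuous⟩

/-- For a compact Hausdorff space `X`, a homeomorphism `h` of `X` is chain
transitive iff `h[cl(U)] ⊄ U` for every open `U` with `U ≠ ∅` and `U ≠ X`. -/
theorem stmt_5 (X : Type*) [TopologicalSpace X] [CompactSpace X] [T2Space X]
    (h : X ≃ₜ X) :
    ChainTransitive ⇑h ↔
      ∀ U : Set X, IsOpen U → U ≠ ∅ → U ≠ univ → ¬(⇑h '' closure U ⊆ U) :=
  stmt_5_general X h
end
end

section
/- For any compact Hausdorff space X, the set of all chain transitive homeomorphisms of X is a closed subset of H(X) with the compact-open topology. -/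
open Set TopologicalSpace

noncomputable section

/-- For a compact Hausdorff space `X`, the set of chain transitive homeomorphisms
of `X` is closed in `H(X)` with the compact-open topology. -/
theorem stmt_7 (X : Type*) [TopologicalSpace X] [CompactSpace X] [T2Space X] :
    IsClosed {h : X ≃ₜ X | ChainTransitive ⇑h} := by
  rw [← isOpen_compl_iff, isOpen_iff_forall_mem_open]
  intro h hh
  simp only [mem_compl_iff, mem_setOf_eq, ChainTransitive, not_forall,
    Classical.not_imp] at hh
  obtain ⟨a, b, 𝒰, h𝒰o, h𝒰cov, hno⟩ := hh
  -- finite subcover of the preimage cover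
  obtain ⟨s, hs⟩ := isCompact_univ.elim_finite_subcover
    (fun U : 𝒰 => (⇑h) ⁻¹' U.1) (fun U => (h𝒰o U.1 U.2).preimage h.continuous)
    (by
      intro x _
      have : h x ∈ ⋃₀ 𝒰 := by rw [h𝒰cov]; trivial
      obtain ⟨U, hU, hxU⟩ := this
      exact mem_iUnion.2 ⟨⟨U, hU⟩, hxU⟩)
  -- shrink the finite cover to a closed cover
  obtain ⟨K, hKcov, hKcl, hKsub⟩ := exists_iUnion_eq_closed_subset
    (u := fun i : s => (⇑h) ⁻¹' (i.1.1 : Set X))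
    (fun i => (h𝒰o i.1.1 i.1.2).preimage h.continuous)
    (fun x => Set.toFinite _)
    (by
      apply eq_univ_of_univ_subset
      intro x hx
      obtain ⟨i, hi, hxi⟩ := mem_iUnion₂.1 (hs hx)
      exact mem_iUnion.2 ⟨⟨i, hi⟩, hxi⟩)
  refine ⟨⋂ i : s, {g : X ≃ₜ X | ∀ x ∈ K i, g x ∈ (i.1.1 : Set X)}, ?_, ?_, ?_⟩
  · -- the neighborhood is contained in the complement
    intro g hg
    simp only [mem_iInter, mem_setOf_eq] at hg
    simp only [mem_compl_iff, mem_setOf_eq]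
    intro hCT
    classical
    -- the refined cover adapted to g
    set V : X → Set X := fun p =>
      ⋂ i : s, if p ∈ (⇑g) '' K i then (i.1.1 : Set X) else ((⇑g) '' K i)ᶜ with hV
    have himg : ∀ i : s, IsClosed ((⇑g) '' K i) := fun i =>
      (((hKcl i).isCompact).image g.continuous).isClosed
    have hVopen : ∀ p, IsOpen (V p) := by
      intro p
      apply isOpen_iInter_of_finite
      intro i
      split
      · exact h𝒰o i.1.1 i.1.2
      · exact (himg i).isOpen_compl
    have hVmem : ∀ p, p ∈ V p := by
      intro p
      apply mem_iInter.2
      intro i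
      split
      · next hp => obtain ⟨q, hq, rfl⟩ := hp; exact hg i q hq
      · next hp => exact hp
    obtain ⟨n, hn, x, hx0, hxn, hchain⟩ := hCT a b (range V)
      (by rintro U ⟨p, rfl⟩; exact hVopen p)
      (by
        apply eq_univ_of_univ_subset
        intro p _
        exact ⟨V p, ⟨p, rfl⟩, hVmem p⟩)
    apply hno
    refine ⟨n, hn, x, hx0, hxn, ?_⟩
    intro i hi
    obtain ⟨W, ⟨p, rfl⟩, hgW, hxW⟩ := hchain i hi
    -- x i lies in some K k
    have : x i ∈ ⋃ k : s, K k := by rw [hKcov]; trivial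
    obtain ⟨k, hk⟩ := mem_iUnion.1 this
    have hpk : p ∈ (⇑g) '' K k := by
      by_contra hp
      have := mem_iInter.1 hgW k
      rw [if_neg hp] at this
      exact this ⟨x i, hk, rfl⟩
    have hVk : V p ⊆ (k.1.1 : Set X) := fun q hq => by
      have := mem_iInter.1 hq k
      rwa [if_pos hpk] at this
    exact ⟨k.1.1, k.1.2, hKsub k hk, hVk hxW⟩
  · -- openness
    apply isOpen_iInter_of_finite
    intro i
    exact TopologicalSpace.isOpen_generateFrom_of_mem
      ⟨K i, i.1.1, (hKcl i).isCompact, h𝒰o i.1.1 i.1.2, rfl⟩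
  · -- h belongs
    exact mem_iInter.2 fun i x hx => hKsub i hx
end
end

section
/- Let X be a compact Hausdorff space. A homeomorphism h ∈ H(X) is chain transitive if and only if Hit(𝒱,h) is a transitive directed graph for every open cover 𝒱 of X consisting of nonempty open sets. -/
open Set TopologicalSpace

noncomputable section

/-- For a compact Hausdorff space `X`, a homeomorphism `h` of `X` is chain
transitive iff for every open cover `𝒱` of `X` by nonempty open sets, the hitting
digraph `Hit(𝒱,h)` (edges `A → B` iff `h[A] ∩ B ≠ ∅`) is transitive, i.e. any two
vertices are joined by a path of length `n ≥ 1`. -/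
theorem stmt_8 (X : Type*) [TopologicalSpace X] [CompactSpace X] [T2Space X]
    (h : X ≃ₜ X) :
    ChainTransitive ⇑h ↔
      ∀ 𝒱 : Set (Set X), (∀ U ∈ 𝒱, IsOpen U ∧ U.Nonempty) → ⋃₀ 𝒱 = univ →
        ∀ A ∈ 𝒱, ∀ B ∈ 𝒱, ∃ n : ℕ, 1 ≤ n ∧ ∃ v : ℕ → Set X,
          v 0 = A ∧ v n = B ∧ (∀ i ≤ n, v i ∈ 𝒱) ∧
          ∀ i < n, ((⇑h '' v i) ∩ v (i + 1)).Nonempty := by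
  classical
  constructor
  · intro hct 𝒱 h𝒱 hcov A hA B hB
    obtain ⟨a, ha⟩ := (h𝒱 A hA).2
    obtain ⟨p, hp⟩ := (h𝒱 B hB).2
    obtain ⟨n, hn1, x, hx0, hxn, hstep⟩ :=
      hct a (h.symm p) 𝒱 (fun U hU => (h𝒱 U hU).1) hcov
    choose! U hU1 hU2 hU3 using hstep
    refine ⟨n + 1, by omega,
      fun i => if i = 0 then A else if n + 1 ≤ i then B else U (i - 1),
      by simp, by simp, ?_, ?_⟩
    · intro i hi
      by_cases h0 : i = 0
      · simp [h0, hA]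
      · by_cases hn' : n + 1 ≤ i
        · simp [h0, hn', hB]
        · simpa only [if_neg h0, if_neg hn'] using hU1 (i - 1) (by omega)
    · intro i hi
      by_cases h0 : i = 0
      · subst h0
        refine ⟨h a, ⟨a, ha, rfl⟩, ?_⟩
        simp only [if_neg (by omega : ¬ (1:ℕ) = 0), if_neg (by omega : ¬ n + 1 ≤ 1)]
        have := hU2 0 (by omega)
        rwa [hx0] at this
      · by_cases hn' : i = n
        · subst hn'
          refine ⟨h (h.symm p), ⟨h.symm p, ?_, rfl⟩, ?_⟩
          · simp only [if_neg h0, if_neg (by omega : ¬ i + 1 ≤ i)]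
            have := hU3 (i - 1) (by omega)
            rwa [show i - 1 + 1 = i by omega, hxn] at this
          · simp only [if_neg (by omega : ¬ i + 1 = 0), if_pos (le_refl (i + 1))]
            simpa using hp
        · have hilt : i < n := by omega
          refine ⟨h (x i), ⟨x i, ?_, rfl⟩, ?_⟩
          · simp only [if_neg h0, if_neg (by omega : ¬ n + 1 ≤ i)]
            have := hU3 (i - 1) (by omega)
            rwa [show i - 1 + 1 = i by omega] at this
          · have := hU2 i hilt
            simpa only [if_neg (by omega : ¬ i + 1 = 0),
              if_neg (by omega : ¬ n + 1 ≤ i + 1), Nat.add_sub_cancel] using this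
  · intro H a b 𝒰 hop hcov
    set 𝒱 : Set (Set X) := {U ∈ 𝒰 | U.Nonempty} with h𝒱def
    have h𝒱 : ∀ U ∈ 𝒱, IsOpen U ∧ U.Nonempty := fun U hU => ⟨hop U hU.1, hU.2⟩
    have hcov' : ⋃₀ 𝒱 = univ := by
      apply eq_univ_of_forall
      intro y
      have : y ∈ ⋃₀ 𝒰 := hcov ▸ mem_univ y
      obtain ⟨U, hU, hyU⟩ := this
      exact ⟨U, ⟨hU, ⟨y, hyU⟩⟩, hyU⟩
    have hha : h a ∈ ⋃₀ 𝒱 := hcov' ▸ mem_univ _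
    have hb : b ∈ ⋃₀ 𝒱 := hcov' ▸ mem_univ _
    obtain ⟨A, hA, hhaA⟩ := hha
    obtain ⟨B, hB, hbB⟩ := hb
    obtain ⟨n, hn1, v, hv0, hvn, hvmem, hedge⟩ := H 𝒱 h𝒱 hcov' A hA B hB
    have hsel : ∀ i, ∃ zz : X, i < n → zz ∈ v i ∧ h zz ∈ v (i + 1) := by
      intro i
      by_cases hi : i < n
      · obtain ⟨w, ⟨zz, hzz, hw⟩, hw2⟩ := hedge i hi
        exact ⟨zz, fun _ => ⟨hzz, by rwa [hw]⟩⟩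
      · exact ⟨a, fun hc => absurd hc hi⟩
    choose z hz using hsel
    refine ⟨n + 1, by omega,
      fun i => if i = 0 then a else if n + 1 ≤ i then b else z (i - 1), by simp, by simp,
      ?_⟩
    intro i hi
    by_cases h0 : i = 0
    · subst h0
      refine ⟨A, hA.1, by simpa [hv0] using hhaA, ?_⟩
      simp only [if_neg (by omega : ¬ (1:ℕ) = 0), if_neg (by omega : ¬ n + 1 ≤ 1)]
      have := (hz 0 (by omega)).1
      rwa [hv0] at this
    · by_cases hn' : i = n
      · subst hn'
        refine ⟨B, hB.1, ?_, ?_⟩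
        · simp only [if_neg h0, if_neg (by omega : ¬ i + 1 ≤ i)]
          have h2 := (hz (i - 1) (by omega)).2
          rwa [show i - 1 + 1 = i by omega, hvn] at h2
        · simp only [if_neg (by omega : ¬ i + 1 = 0), if_pos (le_refl (i + 1))]
          exact hbB
      · have hilt : i < n := by omega
        refine ⟨v i, (hvmem i (by omega)).1, ?_, ?_⟩
        · simp only [if_neg h0, if_neg (by omega : ¬ n + 1 ≤ i)]
          have h2 := (hz (i - 1) (by omega)).2
          rwa [show i - 1 + 1 = i by omega] at h2
        · simp only [if_neg (by omega : ¬ i + 1 = 0),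
            if_neg (by omega : ¬ n + 1 ≤ i + 1), Nat.add_sub_cancel]
          exact (hz i hilt).1
end
end

section
/- If h is a trivial self-homeomorphism of ω* that is chain transitive, then h is isomorphic to the shift map σ or to its inverse σ⁻¹. -/
open Set TopologicalSpace

noncomputable section

/-- `ω*`, the Stone–Čech remainder `βω ∖ ω`: the space of free (non-principal)
ultrafilters on `ℕ`, as a subspace of `βℕ = Ultrafilter ℕ` (whose topology is
generated by the clopen sets `A* = {u : A ∈ u}` for `A ⊆ ℕ`). -/
abbrev NStar : Type := {u : Ultrafilter ℕ // ∀ n : ℕ, u ≠ pure n}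

lemma free_map_add (u : NStar) : ∀ n : ℕ, Ultrafilter.map (· + 1) u.1 ≠ pure n := by
  intro n hn
  have h1 : (· + 1) ⁻¹' {n} ∈ u.1 := by
    have : {n} ∈ Ultrafilter.map (· + 1) u.1 := by
      rw [hn]; exact Ultrafilter.mem_pure.mpr rfl
    exact this
  have hfin : ((· + 1) ⁻¹' {n} : Set ℕ).Finite := by
    apply Set.Finite.subset (Set.finite_singleton (n - 1))
    intro x hx
    simp only [Set.mem_preimage, Set.mem_singleton_iff] at hx ⊢
    omega
  obtain ⟨x, -, hx⟩ := Ultrafilter.eq_pure_of_finite_mem hfin h1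
  exact u.2 x hx

lemma free_map_sub (u : NStar) : ∀ n : ℕ, Ultrafilter.map (· - 1) u.1 ≠ pure n := by
  intro n hn
  have h1 : (· - 1) ⁻¹' {n} ∈ u.1 := by
    have : {n} ∈ Ultrafilter.map (· - 1) u.1 := by
      rw [hn]; exact Ultrafilter.mem_pure.mpr rfl
    exact this
  have hfin : ((· - 1) ⁻¹' {n} : Set ℕ).Finite := by
    apply Set.Finite.subset (Set.toFinite {0, 1, n + 1})
    intro x hx
    simp only [Set.mem_preimage, Set.mem_singleton_iff] at hx
    simp only [Set.mem_insert_iff, Set.mem_singleton_iff]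
    omega
  obtain ⟨x, -, hx⟩ := Ultrafilter.eq_pure_of_finite_mem hfin h1
  exact u.2 x hx

lemma ucofinite (u : NStar) : (u.1 : Filter ℕ) ≤ Filter.cofinite := by
  rcases u.1.le_cofinite_or_eq_pure with h | ⟨a, ha⟩
  · exact h
  · exact absurd ha (u.2 a)

lemma left_inv_aux (u : NStar) :
    Ultrafilter.map (· - 1) (Ultrafilter.map (· + 1) u.1) = u.1 := by
  apply Ultrafilter.coe_injective
  rw [Ultrafilter.coe_map, Ultrafilter.coe_map, Filter.map_map]
  have : ((· - 1) ∘ (· + 1) : ℕ → ℕ) = id := by funext x; simp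
  rw [this, Filter.map_id]

lemma right_inv_aux (u : NStar) :
    Ultrafilter.map (· + 1) (Ultrafilter.map (· - 1) u.1) = u.1 := by
  apply Ultrafilter.coe_injective
  rw [Ultrafilter.coe_map, Ultrafilter.coe_map, Filter.map_map]
  have h1 : ((· + 1) ∘ (· - 1) : ℕ → ℕ) =ᶠ[(u.1 : Filter ℕ)] id := by
    apply ucofinite u
    have : {x : ℕ | ¬ ((· + 1) ∘ (· - 1) : ℕ → ℕ) x = id x} ⊆ {0} := by
      intro x hx
      simp only [Function.comp_apply, id_eq, Set.mem_setOf_eq] at hx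
      simp only [Set.mem_singleton_iff]
      omega
    exact Set.Finite.subset (Set.finite_singleton 0) this
  calc Filter.map ((· + 1) ∘ (· - 1)) (u.1 : Filter ℕ)
      = Filter.map id (u.1 : Filter ℕ) := Filter.map_congr h1
    _ = (u.1 : Filter ℕ) := Filter.map_id

lemma continuous_umap (m : ℕ → ℕ) :
    Continuous (Ultrafilter.map m : Ultrafilter ℕ → Ultrafilter ℕ) := by
  rw [ultrafilterBasis_is_basis.continuous_iff]
  rintro _ ⟨s, rfl⟩
  exact ultrafilter_isOpen_basic (m ⁻¹' s)

/-- The shift map on `ω*`: it sends `u` to the ultrafilter generated by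
`{A + 1 : A ∈ u}`, i.e. the image ultrafilter of `u` under `n ↦ n + 1`. -/
def shiftF (u : NStar) : NStar := ⟨Ultrafilter.map (· + 1) u.1, free_map_add u⟩

/-- The inverse of the shift map on `ω*`, induced by the predecessor function. -/
def shiftInvF (u : NStar) : NStar := ⟨Ultrafilter.map (· - 1) u.1, free_map_sub u⟩

/-- The shift map `σ : ω* → ω*` as a self-homeomorphism of `ω*`. -/
def sigmaShift : NStar ≃ₜ NStar :=
  { toFun := shiftF
    invFun := shiftInvF
    left_inv := fun u => Subtype.ext (left_inv_aux u)
    right_inv := fun u => Subtype.ext (right_inv_aux u)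
    continuous_toFun :=
      Continuous.subtype_mk ((continuous_umap (· + 1)).comp continuous_subtype_val) _
    continuous_invFun :=
      Continuous.subtype_mk ((continuous_umap (· - 1)).comp continuous_subtype_val) _ }

/-- `f` and `g` are isomorphic dynamical systems on `ω*`: there is `h ∈ H(ω*)`
with `h ∘ f = g ∘ h`. -/
def Isomorphic (f g : NStar ≃ₜ NStar) : Prop :=
  ∃ h : NStar ≃ₜ NStar, ∀ u, h (f u) = g (h u)

/-- `Iso(σ)`: the set of members of `H(ω*)` isomorphic to the shift map `σ`. -/
def IsoSigma : Set (NStar ≃ₜ NStar) := {h | Isomorphic h sigmaShift}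

/-- `Iso(σ⁻¹)`: the set of members of `H(ω*)` isomorphic to `σ⁻¹`. -/
def IsoSigmaInv : Set (NStar ≃ₜ NStar) := {h | Isomorphic h sigmaShift.symm}

/-- `f : ω → ω` is a mod-finite permutation of `ω`: it restricts to a bijection
between two cofinite subsets of `ω`. -/
def ModFinPerm (f : ℕ → ℕ) : Prop :=
  ∃ A B : Set ℕ, A.Finite ∧ B.Finite ∧ Set.BijOn f Aᶜ Bᶜ

/-- `h ∈ H(ω*)` is trivial: it is induced by a mod-finite permutation `f` of `ω`,
i.e. `h(u)` is the ultrafilter generated by `{f[A] : A ∈ u}` for every `u ∈ ω*`. -/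
def IsTrivialHomeo (h : NStar ≃ₜ NStar) : Prop :=
  ∃ f : ℕ → ℕ, ModFinPerm f ∧
    ∀ (u : NStar) (A : Set ℕ), A ∈ u.1 → f '' A ∈ (h u).1

/-!
A trivial homeomorphism `h` acts on `ω*` as the image-ultrafilter map of a mod-finite permutation
`f` of `ω`, with an almost-inverse `g` inducing `h⁻¹`. If an infinite, coinfinite `S ⊆ ω` were
mapped into itself by `f` up to finitely many points, the clopen set `S*` would be `h`-invariant,
which chain transitivity forbids; so `f` (and likewise `g`) is expanding. An expanding map has
only finitely many periodic points, and walking backwards along `g` shows that every other point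
lies in the forward `f`-orbit of one of finitely many points. Hence some forward orbit of `f` or
of `g` is infinite; being invariant, it is cofinite, and enumerating it conjugates `f` (or `g`) to
`n ↦ n + 1` modulo finite sets, so `h` (or `h⁻¹`) is isomorphic to `σ`.
-/

open Filter Function

section Dynamics

variable {α : Type*}

def fwdOrbit (f : α → α) (x : α) : Set α := range fun n => f^[n] x

lemma mapsTo_fwdOrbit (f : α → α) (x : α) : MapsTo f (fwdOrbit f x) (fwdOrbit f x) := by
  rintro _ ⟨n, rfl⟩
  exact ⟨n + 1, iterate_succ_apply' f n x⟩

lemma self_mem_fwdOrbit (f : α → α) (x : α) : x ∈ fwdOrbit f x := ⟨0, rfl⟩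

lemma fwdOrbit_eq_periodicOrbit {f : α → α} {x : α} (hx : x ∈ periodicPts f) :
    fwdOrbit f x = {y | y ∈ periodicOrbit f x} := by
  ext
  simp [fwdOrbit, hx]

lemma fwdOrbit_finite_of_mem_periodicPts {f : α → α} {x : α} (hx : x ∈ periodicPts f) :
    (fwdOrbit f x).Finite := by
  refine ((finite_Iio (minimalPeriod f x)).image fun n => f^[n] x).subset ?_
  rintro _ ⟨n, rfl⟩
  exact ⟨n % minimalPeriod f x, Nat.mod_lt _ (minimalPeriod_pos_of_mem_periodicPts hx),
    iterate_mod_minimalPeriod_eq⟩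

lemma fwdOrbit_apply_eq {f : α → α} {x : α} (hx : x ∈ periodicPts f) :
    fwdOrbit f (f x) = fwdOrbit f x := by
  have hfx : f x ∈ periodicPts f := Semiconj.mapsTo_periodicPts (Function.Commute.refl f) hx
  rw [fwdOrbit_eq_periodicOrbit hx, fwdOrbit_eq_periodicOrbit hfx, periodicOrbit_apply_eq hx]

lemma injective_iterate_of_fwdOrbit_infinite {f : α → α} {x : α}
    (hx : (fwdOrbit f x).Infinite) : Injective fun n => f^[n] x := by
  intro i j hij
  by_contra hne
  wlog hlt : i < j generalizing i j
  · exact this hij.symm (Ne.symm hne) (by omega)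
  -- From time `i` on, the orbit runs around the cycle of the periodic point `f^[i] x`.
  have hper : f^[i] x ∈ periodicPts f := by
    refine mk_mem_periodicPts (n := j - i) (by omega) ?_
    change f^[j - i] (f^[i] x) = f^[i] x
    rw [← iterate_add_apply, Nat.sub_add_cancel hlt.le]
    exact hij.symm
  refine hx ((((finite_Iio i).image fun n => f^[n] x).union
    (fwdOrbit_finite_of_mem_periodicPts hper)).subset ?_)
  rintro _ ⟨n, rfl⟩
  rcases lt_or_ge n i with hn | hn
  · exact Or.inl ⟨n, hn, rfl⟩
  · exact Or.inr ⟨n - i, by simp only [← iterate_add_apply, Nat.sub_add_cancel hn]⟩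

/-- Every set `S` that `f` maps into itself up to finitely many points is finite or cofinite. -/
def Expanding (f : α → α) : Prop :=
  ∀ S : Set α, S.Infinite → Sᶜ.Infinite → (f '' S \ S).Infinite

lemma Expanding.finite_or_finite_compl {f : α → α} (hf : Expanding f) {S : Set α}
    (hS : MapsTo f S S) : S.Finite ∨ Sᶜ.Finite := by
  by_contra! hS'
  exact hf S hS'.1 hS'.2 (by simp [sdiff_eq_empty.2 hS.image_subset])

lemma Expanding.fwdOrbit_compl_finite {f : α → α} (hf : Expanding f) {x : α}
    (hx : (fwdOrbit f x).Infinite) : (fwdOrbit f x)ᶜ.Finite :=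
  (hf.finite_or_finite_compl (mapsTo_fwdOrbit f x)).resolve_left hx

lemma Set.Infinite.exists_infinite_subset_infinite_diff {s : Set α} (hs : s.Infinite) :
    ∃ t ⊆ s, t.Infinite ∧ (s \ t).Infinite := by
  set e := hs.natEmbedding
  have he : ∀ a b, (e a : α) = e b → a = b := fun a b hab => e.injective (Subtype.ext hab)
  refine ⟨range fun k => (e (2 * k) : α), ?_, ?_, ?_⟩
  · rintro _ ⟨k, rfl⟩
    exact (e _).2
  · exact infinite_range_of_injective fun a b hab => by have := he _ _ hab; omega
  · refine Set.Infinite.mono ?_ (infinite_range_of_injective (f := fun k => (e (2 * k + 1) : α))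
      fun a b hab => by have := he _ _ hab; omega)
    rintro _ ⟨k, rfl⟩
    refine ⟨(e _).2, ?_⟩
    rintro ⟨j, hj⟩
    have := he _ _ hj
    omega

/-- The union of every other cycle of `f` would be an infinite, coinfinite invariant set. -/
lemma Expanding.periodicPts_finite {f : α → α} (hf : Expanding f) : (periodicPts f).Finite := by
  by_contra hP
  set cycle : α → Set α := fwdOrbit f
  have hcycles : (cycle '' periodicPts f).Infinite := by
    refine fun hfin => hP ((hfin.biUnion (t := id) ?_).subset ?_)
    · rintro _ ⟨x, hx, rfl⟩
      exact fwdOrbit_finite_of_mem_periodicPts hx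
    intro x hx
    exact mem_biUnion (mem_image_of_mem cycle hx) (self_mem_fwdOrbit f x)
  obtain ⟨T, hT, hT_inf, hT_diff⟩ := hcycles.exists_infinite_subset_infinite_diff
  set Q := periodicPts f ∩ cycle ⁻¹' T
  have hQ : MapsTo f Q Q := fun x hx =>
    ⟨Semiconj.mapsTo_periodicPts (Function.Commute.refl f) hx.1, by
      simpa only [mem_preimage, cycle, fwdOrbit_apply_eq hx.1] using hx.2⟩
  have hQ_inf : Q.Infinite := Infinite.of_image cycle <| by
    rwa [image_inter_preimage, inter_eq_right.2 hT]
  have hQc_inf : Qᶜ.Infinite := by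
    refine Infinite.of_image cycle (hT_diff.mono ?_)
    rintro _ ⟨⟨x, hx, rfl⟩, hxT⟩
    exact ⟨x, fun hxQ => hxT hxQ.2, rfl⟩
  rcases hf.finite_or_finite_compl hQ with h | h
  exacts [hQ_inf h, hQc_inf h]

lemma iterate_apply_iterate_eq_of_forall_notMem {f g : α → α} {E : Set α}
    (hfg : ∀ y ∉ E, f (g y) = y) {x : α} :
    ∀ k : ℕ, (∀ i < k, g^[i] x ∉ E) → f^[k] (g^[k] x) = x
  | 0, _ => rfl
  | k + 1, hk => by
    rw [iterate_succ_apply' g, iterate_succ_apply f, hfg _ (hk k k.lt_succ_self)]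
    exact iterate_apply_iterate_eq_of_forall_notMem hfg k fun i hi => hk i (hi.trans k.lt_succ_self)

/-- Going backwards along `g` from `x`, either the walk meets the finite set where `g` fails to be
a right inverse of `f`, or it stays away from it and, being finite, closes up into a cycle of `f`
through `x`. -/
lemma mem_periodicPts_or_mem_fwdOrbit {f g : α → α} {E : Set α} (hfg : ∀ y ∉ E, f (g y) = y)
    {x : α} (hg : (fwdOrbit g x).Finite) : x ∈ periodicPts f ∨ ∃ s ∈ E, x ∈ fwdOrbit f s := by
  by_cases hE : ∃ k, g^[k] x ∈ E
  · classical
    refine Or.inr ⟨g^[Nat.find hE] x, Nat.find_spec hE, Nat.find hE, ?_⟩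
    exact iterate_apply_iterate_eq_of_forall_notMem hfg _ fun i hi => Nat.find_min hE hi
  · push Not at hE
    have hback := fun k => iterate_apply_iterate_eq_of_forall_notMem hfg (x := x) k fun i _ => hE i
    obtain ⟨i, j, hij, heq⟩ := hg.exists_lt_map_eq_of_forall_mem fun n => mem_range_self n
    refine Or.inl (mk_mem_periodicPts (n := j - i) (by omega) ?_)
    calc f^[j - i] x = f^[j - i] (f^[i] (g^[i] x)) := by rw [hback i]
      _ = f^[j] (g^[j] x) := by rw [← iterate_add_apply, Nat.sub_add_cancel hij.le, heq]
      _ = x := hback j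

lemma exists_infinite_fwdOrbit [Infinite α] {f g : α → α} (hf : Expanding f)
    (hfg : f ∘ g =ᶠ[cofinite] id) :
    (∃ x, (fwdOrbit f x).Infinite) ∨ ∃ x, (fwdOrbit g x).Infinite := by
  by_contra! hfin
  set E := {y | f (g y) ≠ y}
  have hE : E.Finite := hfg
  refine infinite_univ (α := α) ((hf.periodicPts_finite.union
    (hE.biUnion fun s _ => hfin.1 s)).subset fun x _ => ?_)
  rcases mem_periodicPts_or_mem_fwdOrbit (E := E) (fun y hy => not_not.1 hy) (hfin.2 x) with
    hx | ⟨s, hs, hx⟩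
  exacts [Or.inl hx, Or.inr (mem_biUnion hs hx)]

end Dynamics

lemma exists_modFinPerm_comp_eventuallyEq_succ {f : ℕ → ℕ} (hf : Expanding f) {x : ℕ}
    (hx : (fwdOrbit f x).Infinite) :
    ∃ e : ℕ → ℕ, ModFinPerm e ∧ e ∘ f =ᶠ[cofinite] (· + 1) ∘ e := by
  set φ : ℕ → ℕ := fun n => f^[n] x
  have hφ : Injective φ := injective_iterate_of_fwdOrbit_infinite hx
  have he : LeftInverse (invFun φ) φ := leftInverse_invFun hφ
  refine ⟨invFun φ, ⟨(fwdOrbit f x)ᶜ, ∅, hf.fwdOrbit_compl_finite hx, finite_empty, ?_⟩, ?_⟩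
  · rw [compl_compl, compl_empty]
    exact InvOn.bijOn ⟨fun _ ⟨n, hn⟩ => hn ▸ congrArg φ (he n), fun n _ => he n⟩
      (mapsTo_univ _ _) fun n _ => mem_range_self n
  · filter_upwards [(hf.fwdOrbit_compl_finite hx).compl_mem_cofinite] with y hy
    rw [compl_compl] at hy
    obtain ⟨n, rfl⟩ := hy
    show invFun φ (f (f^[n] x)) = invFun φ (f^[n] x) + 1
    rw [← iterate_succ_apply' f]
    exact (he (n + 1)).trans (congrArg (· + 1) (he n).symm)

lemma ModFinPerm.exists_inverse {f : ℕ → ℕ} (hf : ModFinPerm f) :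
    ∃ g : ℕ → ℕ, g ∘ f =ᶠ[cofinite] id ∧ f ∘ g =ᶠ[cofinite] id := by
  obtain ⟨A, B, hA, hB, hbij⟩ := hf
  have hinv := hbij.invOn_invFunOn
  exact ⟨invFunOn f Aᶜ, mem_of_superset hA.compl_mem_cofinite fun _ hx => hinv.1 hx,
    mem_of_superset hB.compl_mem_cofinite fun _ hx => hinv.2 hx⟩

lemma tendsto_cofinite_of_leftInverse {α β : Type*} {f : α → β} {g : β → α}
    (hgf : g ∘ f =ᶠ[cofinite] id) : Tendsto f cofinite cofinite := by
  intro t ht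
  have hE : {x | g (f x) ≠ x}.Finite := hgf
  refine (hE.union (Set.Finite.image g ht)).subset fun x hx => ?_
  by_cases hx' : g (f x) = x
  · exact Or.inr ⟨f x, hx, hx'⟩
  · exact Or.inl hx'

namespace NStar

lemma free_of_le_cofinite {u : Ultrafilter ℕ} (hu : (u : Filter ℕ) ≤ cofinite) (n : ℕ) :
    u ≠ pure n := by
  rintro rfl
  simpa using hu (finite_singleton n).compl_mem_cofinite

lemma exists_mem_of_infinite {S : Set ℕ} (hS : S.Infinite) : ∃ u : NStar, S ∈ u.1 :=
  haveI := hS.cofinite_inf_principal_neBot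
  ⟨⟨Ultrafilter.of (cofinite ⊓ 𝓟 S), free_of_le_cofinite ((Ultrafilter.of_le _).trans inf_le_left)⟩,
    Ultrafilter.of_le _ (mem_inf_of_right (mem_principal_self S))⟩

lemma isClopen_setOf_mem (S : Set ℕ) : IsClopen {u : NStar | S ∈ u.1} :=
  (IsClopen.preimage ⟨ultrafilter_isClosed_basic S, ultrafilter_isOpen_basic S⟩
    continuous_subtype_val : IsClopen (Subtype.val ⁻¹' {u : Ultrafilter ℕ | S ∈ u}))

lemma map_congr (u : NStar) {g₁ g₂ : ℕ → ℕ} (hg : g₁ =ᶠ[cofinite] g₂) :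
    u.1.map g₁ = u.1.map g₂ :=
  Ultrafilter.coe_injective (Filter.map_congr (hg.filter_mono (ucofinite u)))

def map (g : ℕ → ℕ) (hg : Tendsto g cofinite cofinite) (u : NStar) : NStar :=
  ⟨u.1.map g, free_of_le_cofinite ((Filter.map_mono (ucofinite u)).trans hg)⟩

lemma continuous_map (g : ℕ → ℕ) (hg : Tendsto g cofinite cofinite) : Continuous (map g hg) :=
  ((continuous_umap g).comp continuous_subtype_val).subtype_mk _

lemma map_map_of_leftInverse {f g : ℕ → ℕ} (hf : Tendsto f cofinite cofinite)
    (hg : Tendsto g cofinite cofinite) (hgf : g ∘ f =ᶠ[cofinite] id) (u : NStar) :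
    map g hg (map f hf u) = u :=
  Subtype.ext <| (Ultrafilter.map_map _ _ _).trans <| (map_congr u hgf).trans (Ultrafilter.map_id _)

end NStar

def InducedBy (h : NStar → NStar) (f : ℕ → ℕ) : Prop :=
  ∀ u : NStar, (h u).1 = u.1.map f

lemma inducedBy_of_image_mem {h : NStar → NStar} {f : ℕ → ℕ}
    (hf : ∀ (u : NStar) (A : Set ℕ), A ∈ u.1 → f '' A ∈ (h u).1) : InducedBy h f := fun u =>
  Ultrafilter.coe_le_coe.1 fun _ hs => (h u).1.mem_of_superset (hf u _ hs) (image_preimage_subset _ _)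

lemma InducedBy.symm {h : NStar ≃ₜ NStar} {f g : ℕ → ℕ} (hf : InducedBy h f)
    (hgf : g ∘ f =ᶠ[cofinite] id) : InducedBy h.symm g := fun u => by
  conv_rhs => rw [← h.apply_symm_apply u]
  rw [hf, Ultrafilter.map_map, NStar.map_congr _ hgf, Ultrafilter.map_id]

lemma exists_homeomorph_inducedBy {e : ℕ → ℕ} (he : ModFinPerm e) :
    ∃ H : NStar ≃ₜ NStar, InducedBy H e := by
  obtain ⟨e', he'e, hee'⟩ := he.exists_inverse
  have he_tendsto := tendsto_cofinite_of_leftInverse he'e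
  have he'_tendsto := tendsto_cofinite_of_leftInverse hee'
  exact ⟨{ toFun := NStar.map e he_tendsto
           invFun := NStar.map e' he'_tendsto
           left_inv := NStar.map_map_of_leftInverse _ _ he'e
           right_inv := NStar.map_map_of_leftInverse _ _ hee'
           continuous_toFun := NStar.continuous_map _ _
           continuous_invFun := NStar.continuous_map _ _ }, fun _ => rfl⟩

lemma InducedBy.isomorphic {h σ : NStar ≃ₜ NStar} {f m e : ℕ → ℕ} (hf : InducedBy h f)
    (hσ : InducedBy σ m) (he : ModFinPerm e) (hconj : e ∘ f =ᶠ[cofinite] m ∘ e) :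
    Isomorphic h σ := by
  obtain ⟨H, hH⟩ := exists_homeomorph_inducedBy he
  refine ⟨H, fun u => Subtype.ext ?_⟩
  rw [hH, hf, hσ, hH, Ultrafilter.map_map, Ultrafilter.map_map, NStar.map_congr _ hconj]

lemma inducedBy_sigmaShift : InducedBy sigmaShift (· + 1) := fun _ => rfl

lemma InducedBy.isomorphic_sigmaShift {h : NStar ≃ₜ NStar} {f : ℕ → ℕ} (hf : InducedBy h f)
    (hexp : Expanding f) {x : ℕ} (hx : (fwdOrbit f x).Infinite) : Isomorphic h sigmaShift :=
  let ⟨_, he, hconj⟩ := exists_modFinPerm_comp_eventuallyEq_succ hexp hx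
  hf.isomorphic inducedBy_sigmaShift he hconj

lemma isomorphic_symm_of_symm_isomorphic {h σ : NStar ≃ₜ NStar} (hiso : Isomorphic h.symm σ) :
    Isomorphic h σ.symm := by
  obtain ⟨H, hH⟩ := hiso
  refine ⟨H, fun u => ?_⟩
  rw [← σ.symm_apply_apply (H (h u)), ← hH, h.symm_apply_apply]

/-- An invariant clopen set `S*` would separate points of `S*` from points of `(Sᶜ)*`. -/
lemma InducedBy.expanding {h : NStar → NStar} {f : ℕ → ℕ} (hf : InducedBy h f)
    (hmin : ∀ U : Set NStar, IsClopen U → MapsTo h U U → U.Nonempty → U = univ) :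
    Expanding f := by
  intro S hS hSc hD
  have hmaps : MapsTo h {u | S ∈ u.1} {u | S ∈ u.1} := fun u hu => by
    have hfS : f '' S ∈ (h u).1 := hf u ▸ image_mem_map hu
    exact (h u).1.mem_of_superset (inter_mem hfS (ucofinite (h u) hD.compl_mem_cofinite))
      fun y ⟨hy, hyD⟩ => by_contra fun hyS => hyD ⟨hy, hyS⟩
  obtain ⟨u, hu⟩ := NStar.exists_mem_of_infinite hS
  obtain ⟨v, hv⟩ := NStar.exists_mem_of_infinite hSc
  have hU := hmin _ (NStar.isClopen_setOf_mem S) hmaps ⟨u, hu⟩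
  exact Ultrafilter.compl_mem_iff_notMem.1 hv (eq_univ_iff_forall.1 hU v)

section ChainTransitive

variable {X : Type*} [TopologicalSpace X]

/-- A chain from a point of `U` cannot leave `U`, since `U` and `Uᶜ` form an open cover. -/
lemma ChainTransitive.eq_univ_of_mapsTo {h : X → X} (hct : ChainTransitive h) {U : Set X}
    (hU : IsClopen U) (hUh : MapsTo h U U) (hne : U.Nonempty) : U = univ := by
  obtain ⟨a, ha⟩ := hne
  refine eq_univ_of_forall fun b => ?_
  obtain ⟨n, -, x, hx0, hxn, hstep⟩ := hct a b {U, Uᶜ}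
    (by rintro V (rfl | rfl); exacts [hU.isOpen, hU.isClosed.isOpen_compl]) (by simp)
  have hchain : ∀ i ≤ n, x i ∈ U := by
    intro i
    induction i with
    | zero => exact fun _ => hx0 ▸ ha
    | succ i ih =>
      intro hi
      obtain ⟨V, rfl | rfl, hxV, hxV'⟩ := hstep i hi
      · exact hxV'
      · exact absurd (hUh (ih (by omega))) hxV
  exact hxn ▸ hchain n le_rfl

lemma ChainTransitive.eq_univ_of_mapsTo_symm {h : X ≃ₜ X} (hct : ChainTransitive h)
    {U : Set X} (hU : IsClopen U) (hUh : MapsTo h.symm U U) (hne : U.Nonempty) : U = univ := by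
  by_contra hne'
  have hUc : MapsTo h Uᶜ Uᶜ := fun x hx hhx => hx (h.symm_apply_apply x ▸ hUh hhx)
  have := hct.eq_univ_of_mapsTo hU.compl hUc (nonempty_compl.2 hne')
  exact hne.ne_empty (compl_univ_iff.1 this)

end ChainTransitive

/-- If `h` is a trivial self-homeomorphism of `ω*` that is chain transitive, then
`h` is isomorphic to the shift map `σ` or to its inverse `σ⁻¹`. -/
theorem stmt_11 (h : NStar ≃ₜ NStar) (htriv : IsTrivialHomeo h)
    (hct : ChainTransitive ⇑h) :
    Isomorphic h sigmaShift ∨ Isomorphic h sigmaShift.symm := by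
  obtain ⟨f, hf_perm, hf_image⟩ := htriv
  obtain ⟨g, hgf, hfg⟩ := hf_perm.exists_inverse
  have hf : InducedBy h f := inducedBy_of_image_mem hf_image
  have hg : InducedBy h.symm g := hf.symm hgf
  have hf_exp : Expanding f := hf.expanding fun _ hU => hct.eq_univ_of_mapsTo hU
  have hg_exp : Expanding g := hg.expanding fun _ hU => hct.eq_univ_of_mapsTo_symm hU
  rcases exists_infinite_fwdOrbit hf_exp hfg with ⟨x, hx⟩ | ⟨x, hx⟩
  · exact Or.inl (hf.isomorphic_sigmaShift hf_exp hx)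
  · exact Or.inr (isomorphic_symm_of_symm_isomorphic (hg.isomorphic_sigmaShift hg_exp hx))
end
end

section
/- If U ⊆ H(ω*) is open in the compact-open topology, then U ∩ Iso(σ) ≠ ∅ if and only if U ∩ Iso(σ⁻¹) ≠ ∅. -/
open Set TopologicalSpace

noncomputable section

namespace RevAux

variable (T : Set ℕ)

/-- interval endpoints: `a 0 = 0`, `a (k+1) = k`-th element of `T`. -/
noncomputable def aseq : ℕ → ℕ
  | 0 => 0
  | k + 1 => Nat.nth (· ∈ T) k

lemma aseq_mono (hT : T.Infinite) (h0 : 0 ∉ T) : StrictMono (aseq T) := by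
  have hnth : StrictMono (Nat.nth (· ∈ T)) := Nat.nth_strictMono hT
  have h1 : ∀ k, aseq T k < aseq T (k + 1) := by
    intro k
    cases k with
    | zero =>
        have h2 : Nat.nth (· ∈ T) 0 ∈ T := Nat.nth_mem_of_infinite hT 0
        have : Nat.nth (· ∈ T) 0 ≠ 0 := fun h => h0 (h ▸ h2)
        simpa [aseq] using Nat.pos_of_ne_zero this
    | succ k => exact hnth (Nat.lt_succ_self k)
  exact strictMono_nat_of_lt_succ h1

lemma self_le_aseq (hT : T.Infinite) (h0 : 0 ∉ T) (k : ℕ) : k ≤ aseq T k :=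
  (aseq_mono T hT h0).le_apply

lemma mem_T_iff (hT : T.Infinite) (m : ℕ) : m ∈ T ↔ ∃ k, aseq T (k + 1) = m := by
  constructor
  · intro hm
    classical
    exact ⟨Nat.count (· ∈ T) m, Nat.nth_count hm⟩
  · rintro ⟨k, rfl⟩
    exact Nat.nth_mem_of_infinite hT k

/-- index of the interval containing `n`. -/
noncomputable def idx (n : ℕ) : ℕ := Nat.findGreatest (fun k => aseq T k ≤ n) n

lemma idx_le (n : ℕ) : aseq T (idx T n) ≤ n := by
  classical
  exact Nat.findGreatest_spec (P := fun k => aseq T k ≤ n) (Nat.zero_le n) (show aseq T 0 ≤ n from Nat.zero_le n)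

lemma idx_lt (hT : T.Infinite) (h0 : 0 ∉ T) (n : ℕ) : n < aseq T (idx T n + 1) := by
  classical
  by_contra h
  push_neg at h
  have hb : idx T n + 1 ≤ n := le_trans (self_le_aseq T hT h0 _) h
  have := Nat.le_findGreatest (P := fun k => aseq T k ≤ n) hb h
  simp only [idx] at this ⊢
  omega

lemma idx_eq (hT : T.Infinite) (h0 : 0 ∉ T) {k n : ℕ}
    (h1 : aseq T k ≤ n) (h2 : n < aseq T (k + 1)) : idx T n = k := by
  have hle := idx_le T n
  have hlt := idx_lt T hT h0 n
  rcases lt_trichotomy (idx T n) k with h | h | h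
  · have : aseq T (idx T n + 1) ≤ aseq T k := (aseq_mono T hT h0).monotone h
    omega
  · exact h
  · have : aseq T (k + 1) ≤ aseq T (idx T n) := (aseq_mono T hT h0).monotone h
    omega

/-- interval reversal map. -/
noncomputable def rmap (n : ℕ) : ℕ := aseq T (idx T n) + aseq T (idx T n + 1) - 1 - n

lemma rmap_eq (hT : T.Infinite) (h0 : 0 ∉ T) {k n : ℕ}
    (h1 : aseq T k ≤ n) (h2 : n < aseq T (k + 1)) :
    rmap T n = aseq T k + aseq T (k + 1) - 1 - n := by
  rw [rmap, idx_eq T hT h0 h1 h2]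

lemma rmap_invol (hT : T.Infinite) (h0 : 0 ∉ T) (n : ℕ) : rmap T (rmap T n) = n := by
  have h1 := idx_le T n
  have h2 := idx_lt T hT h0 n
  have hkk : aseq T (idx T n) < aseq T (idx T n + 1) :=
    aseq_mono T hT h0 (Nat.lt_succ_self _)
  have hr := rmap_eq T hT h0 h1 h2
  have h3 : aseq T (idx T n) ≤ rmap T n := by omega
  have h4 : rmap T n < aseq T (idx T n + 1) := by omega
  rw [rmap_eq T hT h0 h3 h4]
  omega

/-- off the right endpoints, `r (r n - 1) = n + 1`. -/
lemma prop_b (hT : T.Infinite) (h0 : 0 ∉ T) {n : ℕ} (h : n + 1 ∉ T) :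
    rmap T (rmap T n - 1) = n + 1 := by
  have h1 := idx_le T n
  have h2 := idx_lt T hT h0 n
  have hne : n + 1 ≠ aseq T (idx T n + 1) := by
    intro he
    exact h ((mem_T_iff T hT _).mpr ⟨idx T n, he.symm⟩)
  have hlt : n + 1 < aseq T (idx T n + 1) := by omega
  have hr := rmap_eq T hT h0 h1 h2
  have hkk : aseq T (idx T n) < aseq T (idx T n + 1) :=
    aseq_mono T hT h0 (Nat.lt_succ_self _)
  have hb1 : aseq T (idx T n) ≤ rmap T n - 1 := by omega
  have hb2 : rmap T n - 1 < aseq T (idx T n + 1) := by omega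
  rw [rmap_eq T hT h0 hb1 hb2]
  omega

/-- at right endpoints (other than the smallest ones), `r (r n - 1) ∈ T`. -/
lemma prop_c (hT : T.Infinite) (h0 : 0 ∉ T) {n : ℕ} (h : n + 1 ∈ T)
    (hbig : aseq T 2 < n + 1) : rmap T (rmap T n - 1) ∈ T := by
  obtain ⟨j, hj⟩ := (mem_T_iff T hT _).mp h
  have hj2 : 2 ≤ j := by
    by_contra hc
    have : aseq T (j + 1) ≤ aseq T 2 := (aseq_mono T hT h0).monotone (by omega)
    omega
  have hjj : aseq T j < aseq T (j + 1) := aseq_mono T hT h0 (Nat.lt_succ_self j)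
  have h1 : aseq T j ≤ n := by omega
  have h2 : n < aseq T (j + 1) := by omega
  have hr : rmap T n = aseq T j := by rw [rmap_eq T hT h0 h1 h2]; omega
  have hjm : aseq T (j - 1) < aseq T j := aseq_mono T hT h0 (by omega)
  have hstep : j - 1 + 1 = j := by omega
  have hb1 : aseq T (j - 1) ≤ rmap T n - 1 := by omega
  have hb2 : rmap T n - 1 < aseq T (j - 1 + 1) := by rw [hstep]; omega
  rw [rmap_eq T hT h0 hb1 hb2]
  have hval : aseq T (j - 1) + aseq T (j - 1 + 1) - 1 - (rmap T n - 1) = aseq T (j - 1) := by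
    rw [hstep]; omega
  rw [hval]
  exact (mem_T_iff T hT _).mpr ⟨j - 2, by congr 1; omega⟩

/-- off the left endpoints, `r (r n + 1) = n - 1`. -/
lemma prop_d (hT : T.Infinite) (h0 : 0 ∉ T) {n : ℕ} (h : n ∉ T) (hne : n ≠ 0) :
    rmap T (rmap T n + 1) = n - 1 := by
  have h1 := idx_le T n
  have h2 := idx_lt T hT h0 n
  have hne2 : n ≠ aseq T (idx T n) := by
    intro he
    rcases Nat.eq_zero_or_pos (idx T n) with hz | hp
    · rw [hz] at he
      exact hne (by simpa [aseq] using he)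
    · obtain ⟨k, hk⟩ : ∃ k, idx T n = k + 1 := ⟨idx T n - 1, by omega⟩
      exact h ((mem_T_iff T hT _).mpr ⟨k, by rw [← hk]; exact he.symm⟩)
  have hlt : aseq T (idx T n) < n := by omega
  have hr := rmap_eq T hT h0 h1 h2
  have hb1 : aseq T (idx T n) ≤ rmap T n + 1 := by omega
  have hb2 : rmap T n + 1 < aseq T (idx T n + 1) := by omega
  rw [rmap_eq T hT h0 hb1 hb2]
  omega

/-- at left endpoints, `r (r n + 1) + 1 ∈ T`. -/
lemma prop_e (hT : T.Infinite) (h0 : 0 ∉ T) {n : ℕ} (h : n ∈ T) :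
    rmap T (rmap T n + 1) + 1 ∈ T := by
  obtain ⟨j, hj⟩ := (mem_T_iff T hT _).mp h
  have e1 : j + 1 + 1 = j + 2 := rfl
  have e2 : j + 2 + 1 = j + 3 := rfl
  have hjj : aseq T (j + 1) < aseq T (j + 2) := aseq_mono T hT h0 (by omega)
  have h1 : aseq T (j + 1) ≤ n := by omega
  have h2 : n < aseq T (j + 1 + 1) := by rw [e1]; omega
  have hr : rmap T n = aseq T (j + 2) - 1 := by
    rw [rmap_eq T hT h0 h1 h2, e1]; omega
  have hj2 : aseq T (j + 2) < aseq T (j + 3) := aseq_mono T hT h0 (by omega)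
  have hb1 : aseq T (j + 2) ≤ rmap T n + 1 := by omega
  have hb2 : rmap T n + 1 < aseq T (j + 2 + 1) := by rw [e2]; omega
  rw [rmap_eq T hT h0 hb1 hb2, e2]
  have : aseq T (j + 2) + aseq T (j + 3) - 1 - (rmap T n + 1) + 1 = aseq T (j + 3) := by omega
  rw [this]
  exact (mem_T_iff T hT _).mpr ⟨j + 2, rfl⟩

end RevAux


section Machinery

open TopologicalSpace

/-- `A*` as a subset of `ω*`. -/
def star' (A : Set ℕ) : Set NStar := {u : NStar | A ∈ u.1}

lemma isOpen_star' (A : Set ℕ) : IsOpen (star' A) :=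
  (ultrafilter_isOpen_basic A).preimage continuous_subtype_val

lemma exists_basic {W : Set NStar} (hW : IsOpen W) {v : NStar} (hv : v ∈ W) :
    ∃ B : Set ℕ, B ∈ v.1 ∧ star' B ⊆ W := by
  obtain ⟨W', hW', hWeq⟩ := isOpen_induced_iff.mp hW
  have hv' : v.1 ∈ W' := by rw [← hWeq] at hv; exact hv
  obtain ⟨b, hb, hvb, hbsub⟩ := ultrafilterBasis_is_basis.exists_subset_of_mem_open hv' hW'
  obtain ⟨B, rfl⟩ := hb
  refine ⟨B, hvb, fun u hu => ?_⟩
  rw [← hWeq]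
  exact hbsub hu

lemma free_map_invol (r : ℕ → ℕ) (hr : ∀ n, r (r n) = n) (u : NStar) :
    ∀ n : ℕ, Ultrafilter.map r u.1 ≠ pure n := by
  intro n hn
  have h1 : r ⁻¹' {n} ∈ u.1 := by
    have : {n} ∈ Ultrafilter.map r u.1 := by
      rw [hn]; exact Ultrafilter.mem_pure.mpr rfl
    exact this
  have hfin : (r ⁻¹' {n} : Set ℕ).Finite := by
    apply Set.Finite.subset (Set.finite_singleton (r n))
    intro x hx
    simp only [Set.mem_preimage, Set.mem_singleton_iff] at hx ⊢
    rw [← hx, hr]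
  obtain ⟨x, -, hx⟩ := Ultrafilter.eq_pure_of_finite_mem hfin h1
  exact u.2 x hx

lemma map_map_invol (r : ℕ → ℕ) (hr : ∀ n, r (r n) = n) (u : Ultrafilter ℕ) :
    Ultrafilter.map r (Ultrafilter.map r u) = u := by
  apply Ultrafilter.coe_injective
  rw [Ultrafilter.coe_map, Ultrafilter.coe_map, Filter.map_map]
  have : (r ∘ r : ℕ → ℕ) = id := funext hr
  rw [this, Filter.map_id]

/-- The homeomorphism of `ω*` induced by an involution of `ℕ`. -/
def involHomeo (r : ℕ → ℕ) (hr : ∀ n, r (r n) = n) : NStar ≃ₜ NStar :=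
  { toFun := fun u => ⟨Ultrafilter.map r u.1, free_map_invol r hr u⟩
    invFun := fun u => ⟨Ultrafilter.map r u.1, free_map_invol r hr u⟩
    left_inv := fun u => Subtype.ext (map_map_invol r hr u.1)
    right_inv := fun u => Subtype.ext (map_map_invol r hr u.1)
    continuous_toFun :=
      Continuous.subtype_mk ((continuous_umap r).comp continuous_subtype_val) _
    continuous_invFun :=
      Continuous.subtype_mk ((continuous_umap r).comp continuous_subtype_val) _ }

lemma involHomeo_invol (r : ℕ → ℕ) (hr : ∀ n, r (r n) = n) (u : NStar) :
    involHomeo r hr (involHomeo r hr u) = u := Subtype.ext (map_map_invol r hr u.1)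

lemma mono_color {J : Type*} [Finite J] (c : ℕ → J → Bool) :
    ∃ T : Set ℕ, T.Infinite ∧ 0 ∉ T ∧ ∀ x ∈ T, ∀ y ∈ T, c x = c y := by
  obtain ⟨b, hb⟩ := Finite.exists_infinite_fiber c
  have hinf : (c ⁻¹' {b}).Infinite := Set.infinite_coe_iff.mp hb
  refine ⟨c ⁻¹' {b} \ {0}, hinf.diff (Set.finite_singleton 0), by simp, ?_⟩
  rintro x ⟨hx, -⟩ y ⟨hy, -⟩
  simp only [Set.mem_preimage, Set.mem_singleton_iff] at hx hy
  rw [hx, hy]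

/-- Core approximation lemma, forward direction: any finite family of "graph"
conditions satisfied by `σ` is also satisfied by some conjugate of `σ⁻¹`. -/
lemma approx_fwd (J : Set (Set ℕ × Set ℕ)) (hJfin : J.Finite)
    (hJ : ∀ pq ∈ J, ∀ n, n ∈ pq.1 → n + 1 ∈ pq.2) :
    ∃ f : NStar ≃ₜ NStar, f ∈ IsoSigmaInv ∧
      ∀ pq ∈ J, ∀ u : NStar, pq.1 ∈ u.1 → pq.2 ∈ (f u).1 := by
  classical
  haveI : Finite ↥J := hJfin.to_subtype
  set c : ℕ → ↥J → Bool := fun m j => decide (m - 1 ∈ j.1.1) with hc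
  obtain ⟨T, hT, h0, hmono⟩ := mono_color c
  set r : ℕ → ℕ := RevAux.rmap T with hrdef
  have hr : ∀ n, r (r n) = n := RevAux.rmap_invol T hT h0
  set H : NStar ≃ₜ NStar := involHomeo r hr with hH
  refine ⟨H.trans (sigmaShift.symm.trans H), ⟨H, fun u => ?_⟩, ?_⟩
  · show H (H (sigmaShift.symm (H u))) = sigmaShift.symm (H u)
    exact involHomeo_invol r hr _
  · rintro ⟨P, Q⟩ hpq u hPu
    show Q ∈ (H (sigmaShift.symm (H u))).1
    have hval : (H (sigmaShift.symm (H u))).1 = Ultrafilter.map (fun n => r (r n - 1)) u.1 := by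
      show Ultrafilter.map r (Ultrafilter.map (· - 1) (Ultrafilter.map r u.1)) = _
      apply Ultrafilter.coe_injective
      simp only [Ultrafilter.coe_map, Filter.map_map]
      rfl
    rw [hval]
    show (fun n => r (r n - 1)) ⁻¹' Q ∈ u.1
    have hmem : P ∩ {n | RevAux.aseq T 2 < n} ∈ u.1 := by
      refine u.1.inter_sets hPu (ucofinite u ?_)
      simp only [Filter.mem_cofinite]
      have : {n : ℕ | RevAux.aseq T 2 < n}ᶜ ⊆ Set.Iic (RevAux.aseq T 2) := by
        intro x hx
        simp only [Set.mem_compl_iff, Set.mem_setOf_eq, not_lt] at hx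
        exact hx
      exact Set.Finite.subset (Set.finite_Iic _) this
    refine u.1.sets_of_superset hmem ?_
    rintro n ⟨hnP, hnbig⟩
    simp only [Set.mem_setOf_eq] at hnbig
    show r (r n - 1) ∈ Q
    by_cases hs : n + 1 ∈ T
    · have hv : r (r n - 1) ∈ T := RevAux.prop_c T hT h0 hs (by omega)
      have hcol : c (n + 1) = c (r (r n - 1)) := hmono _ hs _ hv
      have hc1 : c (n + 1) ⟨(P, Q), hpq⟩ = true := by
        simp only [hc, decide_eq_true_eq]
        simpa using hnP
      rw [hcol] at hc1
      simp only [hc, decide_eq_true_eq] at hc1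
      have hvne : r (r n - 1) ≠ 0 := fun h => h0 (h ▸ hv)
      have := hJ (P, Q) hpq _ hc1
      simpa [Nat.sub_add_cancel (Nat.one_le_iff_ne_zero.mpr hvne)] using this
    · rw [hrdef, RevAux.prop_b T hT h0 hs]
      exact hJ (P, Q) hpq n hnP

/-- Core approximation lemma, backward direction: any finite family of "graph"
conditions satisfied by `σ⁻¹` is also satisfied by some conjugate of `σ`. -/
lemma approx_bwd (J : Set (Set ℕ × Set ℕ)) (hJfin : J.Finite)
    (hJ : ∀ pq ∈ J, ∀ n, n ∈ pq.1 → n - 1 ∈ pq.2) :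
    ∃ f : NStar ≃ₜ NStar, f ∈ IsoSigma ∧
      ∀ pq ∈ J, ∀ u : NStar, pq.1 ∈ u.1 → pq.2 ∈ (f u).1 := by
  classical
  haveI : Finite ↥J := hJfin.to_subtype
  set c : ℕ → ↥J → Bool := fun m j => decide (m ∈ j.1.1) with hc
  obtain ⟨T, hT, h0, hmono⟩ := mono_color c
  set r : ℕ → ℕ := RevAux.rmap T with hrdef
  have hr : ∀ n, r (r n) = n := RevAux.rmap_invol T hT h0
  set H : NStar ≃ₜ NStar := involHomeo r hr with hH
  refine ⟨H.trans (sigmaShift.trans H), ⟨H, fun u => ?_⟩, ?_⟩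
  · show H (H (sigmaShift (H u))) = sigmaShift (H u)
    exact involHomeo_invol r hr _
  · rintro ⟨P, Q⟩ hpq u hPu
    show Q ∈ (H (sigmaShift (H u))).1
    have hval : (H (sigmaShift (H u))).1 = Ultrafilter.map (fun n => r (r n + 1)) u.1 := by
      show Ultrafilter.map r (Ultrafilter.map (· + 1) (Ultrafilter.map r u.1)) = _
      apply Ultrafilter.coe_injective
      simp only [Ultrafilter.coe_map, Filter.map_map]
      rfl
    rw [hval]
    show (fun n => r (r n + 1)) ⁻¹' Q ∈ u.1
    have hmem : P ∩ {n | 0 < n} ∈ u.1 := by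
      refine u.1.inter_sets hPu (ucofinite u ?_)
      simp only [Filter.mem_cofinite]
      have : {n : ℕ | 0 < n}ᶜ ⊆ {0} := by
        intro x hx
        simp only [Set.mem_compl_iff, Set.mem_setOf_eq, not_lt, Nat.le_zero] at hx
        simp [hx]
      exact Set.Finite.subset (Set.finite_singleton 0) this
    refine u.1.sets_of_superset hmem ?_
    rintro n ⟨hnP, hnpos⟩
    simp only [Set.mem_setOf_eq] at hnpos
    show r (r n + 1) ∈ Q
    by_cases hs : n ∈ T
    · have hv : r (r n + 1) + 1 ∈ T := RevAux.prop_e T hT h0 hs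
      have hcol : c n = c (r (r n + 1) + 1) := hmono _ hs _ hv
      have hc1 : c n ⟨(P, Q), hpq⟩ = true := by
        simp only [hc, decide_eq_true_eq]; exact hnP
      rw [hcol] at hc1
      simp only [hc, decide_eq_true_eq] at hc1
      have := hJ (P, Q) hpq _ hc1
      simpa using this
    · rw [hrdef, RevAux.prop_d T hT h0 hs (by omega)]
      exact hJ (P, Q) hpq n hnP

end Machinery


section Assembly

open TopologicalSpace

lemma iso_conj {f s : NStar ≃ₜ NStar} (hf : Isomorphic f s) (h : NStar ≃ₜ NStar) :
    Isomorphic ((h.trans f).trans h.symm) s := by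
  obtain ⟨H, hH⟩ := hf
  refine ⟨h.trans H, fun u => ?_⟩
  show H (h (h.symm (f (h u)))) = s (H (h u))
  rw [h.apply_symm_apply]
  exact hH (h u)

lemma cover_lemma (σ₀ : NStar ≃ₜ NStar) (st : ℕ → ℕ)
    (hst : ∀ u : NStar, (σ₀ u).1 = Ultrafilter.map st u.1)
    {K W : Set NStar} (hK : IsCompact K) (hW : IsOpen W)
    (h : ∀ y ∈ K, σ₀ y ∈ W) :
    ∃ C : Set (Set ℕ), C.Finite ∧ (∀ B ∈ C, star' B ⊆ W) ∧
      K ⊆ ⋃ B ∈ C, star' (st ⁻¹' B) := by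
  classical
  choose B hB1 hB2 using fun y : K => exists_basic hW (h y y.2)
  have hmem : ∀ y : K, (y : NStar) ∈ star' (st ⁻¹' B y) := by
    intro y
    show st ⁻¹' B y ∈ (y : NStar).1
    have : B y ∈ (σ₀ y).1 := hB1 y
    rw [hst] at this
    exact this
  obtain ⟨t, ht⟩ := hK.elim_finite_subcover (fun y : K => star' (st ⁻¹' B y))
    (fun y => isOpen_star' _) (fun x hx => Set.mem_iUnion.mpr ⟨⟨x, hx⟩, hmem ⟨x, hx⟩⟩)
  refine ⟨B '' ↑t, (t.finite_toSet.image B), ?_, ?_⟩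
  · rintro _ ⟨y, -, rfl⟩
    exact hB2 y
  · intro x hx
    obtain ⟨y, hyt, hxy⟩ := Set.mem_iUnion₂.mp (ht hx)
    exact Set.mem_iUnion₂.mpr ⟨B y, ⟨y, hyt, rfl⟩, hxy⟩

lemma main_step (σ₀ : NStar ≃ₜ NStar) (st : ℕ → ℕ)
    (hst : ∀ u : NStar, (σ₀ u).1 = Ultrafilter.map st u.1)
    (Iso2 : Set (NStar ≃ₜ NStar))
    (hIso2conj : ∀ f ∈ Iso2, ∀ h : NStar ≃ₜ NStar, (h.trans f).trans h.symm ∈ Iso2)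
    (happrox : ∀ J : Set (Set ℕ × Set ℕ), J.Finite →
        (∀ pq ∈ J, ∀ n ∈ pq.1, st n ∈ pq.2) →
        ∃ f, f ∈ Iso2 ∧ ∀ pq ∈ J, ∀ u : NStar, pq.1 ∈ u.1 → pq.2 ∈ (f u).1)
    (U : Set (NStar ≃ₜ NStar)) (hU : IsOpen U)
    (g : NStar ≃ₜ NStar) (hgU : g ∈ U) (h : NStar ≃ₜ NStar)
    (hh : ∀ u, h (g u) = σ₀ (h u)) : (U ∩ Iso2).Nonempty := by
  classical
  have hb : IsTopologicalBasis
      ((fun f : Set (Set (NStar ≃ₜ NStar)) => ⋂₀ f) '' {f : Set (Set (NStar ≃ₜ NStar)) | f.Finite ∧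
        f ⊆ {S : Set (NStar ≃ₜ NStar) | ∃ K U : Set NStar, IsCompact K ∧ IsOpen U ∧
          S = {h : NStar ≃ₜ NStar | ∀ x ∈ K, h x ∈ U}}}) :=
    isTopologicalBasis_of_subbasis rfl
  obtain ⟨V, ⟨t, ⟨htfin, htsub⟩, rfl⟩, hgV, hVU⟩ := hb.exists_subset_of_mem_open hgU hU
  choose! K W hKc hWo hSeq using fun S (hS : S ∈ t) =>
    (htsub hS : ∃ K W : Set NStar, IsCompact K ∧ IsOpen W ∧
      S = {f : NStar ≃ₜ NStar | ∀ x ∈ K, f x ∈ W})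
  have hcov : ∀ S ∈ t, ∃ C : Set (Set ℕ), C.Finite ∧
      (∀ B ∈ C, star' B ⊆ h '' (W S)) ∧ h '' (K S) ⊆ ⋃ B ∈ C, star' (st ⁻¹' B) := by
    intro S hS
    apply cover_lemma σ₀ st hst ((hKc S hS).image h.continuous)
      (h.isOpen_image.mpr (hWo S hS))
    rintro _ ⟨x, hx, rfl⟩
    rw [← hh x]
    have hgS : g ∈ S := hgV S hS
    rw [hSeq S hS] at hgS
    exact Set.mem_image_of_mem h (hgS x hx)
  choose! C hCfin hCsub hCcov using hcov
  set J : Set (Set ℕ × Set ℕ) := ⋃ S ∈ t, (fun B => (st ⁻¹' B, B)) '' (C S) with hJ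
  have hJfin : J.Finite := htfin.biUnion fun S hS => ((hCfin S hS).image _)
  have hJprop : ∀ pq ∈ J, ∀ n ∈ pq.1, st n ∈ pq.2 := by
    intro pq hpq n hn
    obtain ⟨S, hS, B, hB, rfl⟩ := by
      simpa only [hJ, Set.mem_iUnion, Set.mem_image, exists_prop] using hpq
    exact hn
  obtain ⟨f₀, hf₀Iso, hf₀⟩ := happrox J hJfin hJprop
  refine ⟨(h.trans f₀).trans h.symm, hVU ?_, hIso2conj f₀ hf₀Iso h⟩
  intro S hS
  rw [hSeq S hS]
  intro x hx
  have hyK : h x ∈ h '' (K S) := Set.mem_image_of_mem h hx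
  obtain ⟨B, hB, hyB⟩ := Set.mem_iUnion₂.mp (hCcov S hS hyK)
  have hpairJ : (st ⁻¹' B, B) ∈ J :=
    Set.mem_iUnion₂.mpr ⟨S, hS, Set.mem_image_of_mem _ hB⟩
  have hf₀y : B ∈ (f₀ (h x)).1 := hf₀ _ hpairJ (h x) hyB
  have : f₀ (h x) ∈ h '' (W S) := hCsub S hS B hB hf₀y
  obtain ⟨w, hw, hweq⟩ := this
  show h.symm (f₀ (h x)) ∈ W S
  rw [← hweq, h.symm_apply_apply]
  exact hw

end Assembly

/-- If `U ⊆ H(ω*)` is open in the compact-open topology, then `U` meets `Iso(σ)`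
if and only if `U` meets `Iso(σ⁻¹)`. -/
theorem stmt_13 (U : Set (NStar ≃ₜ NStar)) (hU : IsOpen U) :
    (U ∩ IsoSigma).Nonempty ↔ (U ∩ IsoSigmaInv).Nonempty := by
  constructor
  · rintro ⟨g, hgU, hgIso⟩
    obtain ⟨h, hh⟩ := hgIso
    exact main_step sigmaShift (· + 1) (fun u => rfl) IsoSigmaInv
      (fun f hf h' => iso_conj hf h') approx_fwd U hU g hgU h hh
  · rintro ⟨g, hgU, hgIso⟩
    obtain ⟨h, hh⟩ := hgIso
    exact main_step sigmaShift.symm (· - 1) (fun u => rfl) IsoSigma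
      (fun f hf h' => iso_conj hf h') approx_bwd U hU g hgU h hh
end
end

section
/- Suppose G ⊆ H(ω*) is an intersection of fewer than 𝔰 many open sets, where 𝔰 is the splitting number. Then G ∩ Iso(σ) ≠ ∅ if and only if G ∩ Iso(σ⁻¹) ≠ ∅. -/
open Set TopologicalSpace

noncomputable section

/-- The splitting number `𝔰`: the least cardinality of a family `S` of subsets of
`ω` such that every infinite `A ⊆ ω` is split by some `D ∈ S` (both `A ∩ D` and
`A ∖ D` infinite). -/
def splittingNumber : Cardinal :=
  sInf {c : Cardinal | ∃ S : Set (Set ℕ), Cardinal.mk S = c ∧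
    ∀ A : Set ℕ, A.Infinite → ∃ D ∈ S, (A ∩ D).Infinite ∧ (A \ D).Infinite}


/-!
Conjugating by a homeomorphism that carries a member of `G` to `σ` reduces the forward direction
to the case `σ ∈ G`. A neighbourhood of `σ` is cut out by finitely many conditions `σ[C*] ⊆ D*`,
that is, `C ∖ (D - 1)` finite. The sets `C + 1` arising this way are fewer than `𝔰`, so some
infinite `A` is split by none of them. Cut `ω` into intervals `[a n, a (n + 1))` with endpoints in
`A` and let `R` reverse each interval: `τ = R σ⁻¹ R` is conjugate to `σ⁻¹` and agrees with
`k ↦ k + 1` except at the tops of the intervals, where `a (n + 2) - 1 ↦ a n`. As `A` is almost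
contained in or almost disjoint from each `C + 1`, only finitely many exceptions meet `C`, so `τ`
satisfies every condition and lies in `G`. The converse follows by passing to inverses.
-/

open Filter Function

namespace HomeoCO

variable {X : Type*} [TopologicalSpace X]

theorem isOpen_setOf_mapsTo {K U : Set X} (hK : IsCompact K) (hU : IsOpen U) :
    IsOpen {h : X ≃ₜ X | MapsTo h K U} :=
  isOpen_generateFrom_of_mem ⟨K, U, hK, hU, rfl⟩

theorem isTopologicalBasis :
    IsTopologicalBasis ((fun f : Set (Set (X ≃ₜ X)) => ⋂₀ f) ''
      {f | f.Finite ∧ ∀ s ∈ f, ∃ K U : Set X, IsCompact K ∧ IsOpen U ∧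
        s = {h : X ≃ₜ X | MapsTo h K U}}) :=
  isTopologicalBasis_of_subbasis rfl

theorem continuous_conj (k : X ≃ₜ X) : Continuous fun h : X ≃ₜ X => k * h * k⁻¹ := by
  refine continuous_generateFrom_iff.2 ?_
  rintro _ ⟨K, U, hK, hU, rfl⟩
  have : (fun h : X ≃ₜ X => k * h * k⁻¹) ⁻¹' {h | ∀ x ∈ K, h x ∈ U} =
      {h : X ≃ₜ X | MapsTo h (⇑k⁻¹ '' K) (k ⁻¹' U)} := by
    ext h
    simp [MapsTo]
  rw [this]
  exact isOpen_setOf_mapsTo (hK.image k⁻¹.continuous) (hU.preimage k.continuous)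

theorem continuous_inv [CompactSpace X] [T2Space X] : Continuous fun h : X ≃ₜ X => h⁻¹ := by
  refine continuous_generateFrom_iff.2 ?_
  rintro _ ⟨K, U, hK, hU, rfl⟩
  have : (fun h : X ≃ₜ X => h⁻¹) ⁻¹' {h | ∀ x ∈ K, h x ∈ U} = {h : X ≃ₜ X | MapsTo h Uᶜ Kᶜ} := by
    ext h
    simp only [mem_preimage, mem_ofPred_eq, MapsTo, mem_compl_iff, Homeomorph.inv_apply]
    exact ⟨fun H x hxU hxK => hxU (by simpa using H _ hxK),
      fun H x hxK => by_contra fun hU => H hU (by simpa using hxK)⟩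
  rw [this]
  exact isOpen_setOf_mapsTo hU.isClosed_compl.isCompact hK.isClosed.isOpen_compl

end HomeoCO

namespace Splitting

-- Keep `D n` or its complement, whichever lies in the hyperfilter; a diagonal sequence through the
-- finite intersections of these choices is almost contained in each of them.
theorem exists_infinite_unsplit_of_seq (D : ℕ → Set ℕ) :
    ∃ A : Set ℕ, A.Infinite ∧ ∀ n, (A ∩ D n).Finite ∨ (A \ D n).Finite := by
  classical
  let E n := if D n ∈ hyperfilter ℕ then D n else (D n)ᶜ
  have hE : ∀ n, E n ∈ hyperfilter ℕ := fun n => by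
    by_cases h : D n ∈ hyperfilter ℕ
    · simp [E, h]
    · simpa [E, h] using Ultrafilter.compl_mem_iff_notMem.2 h
  have hfreq : ∀ n, ∃ᶠ k in atTop, ∀ j < n, k ∈ E j := fun n =>
    Nat.frequently_atTop_iff_infinite.2 fun hfin =>
      notMem_hyperfilter_of_finite hfin <|
        mem_of_superset ((biInter_mem (finite_lt_nat n)).2 fun j _ => hE j)
          fun k hk j hj => mem_iInter₂.1 hk j hj
  obtain ⟨φ, hφ, hφE⟩ := extraction_forall_of_frequently hfreq
  have hfin : ∀ n, (range φ \ E n).Finite := fun n =>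
    ((finite_le_nat n).image φ).subset <| by
      rintro _ ⟨⟨k, rfl⟩, hk⟩
      exact ⟨k, not_lt.1 fun hnk => hk (hφE k n hnk), rfl⟩
  refine ⟨range φ, infinite_range_of_injective hφ.injective, fun n => ?_⟩
  by_cases h : D n ∈ hyperfilter ℕ
  · exact .inr (by simpa [E, h] using hfin n)
  · exact .inl (by simpa [E, h, sdiff_eq] using hfin n)

theorem exists_split (A : Set ℕ) (hA : A.Infinite) :
    ∃ D : Set ℕ, (A ∩ D).Infinite ∧ (A \ D).Infinite := by
  let e := hA.natEmbedding
  have he : Injective fun n => (e n : ℕ) := Subtype.val_injective.comp e.injective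
  refine ⟨range fun n => (e (2 * n) : ℕ), ?_, ?_⟩
  · refine infinite_of_injective_forall_mem (f := fun n => (e (2 * n) : ℕ))
      (fun m n h => by simpa using he h) fun n => ⟨(e _).2, n, rfl⟩
  · refine infinite_of_injective_forall_mem (f := fun n => (e (2 * n + 1) : ℕ))
      (fun m n h => by simpa using he h) fun n => ⟨(e _).2, ?_⟩
    rintro ⟨m, hm⟩
    have := he hm
    omega

theorem exists_splitting_family_mk_eq :
    ∃ S : Set (Set ℕ), Cardinal.mk S = splittingNumber ∧
      ∀ A : Set ℕ, A.Infinite → ∃ D ∈ S, (A ∩ D).Infinite ∧ (A \ D).Infinite :=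
  csInf_mem (s := {c : Cardinal | ∃ S : Set (Set ℕ), Cardinal.mk S = c ∧
      ∀ A : Set ℕ, A.Infinite → ∃ D ∈ S, (A ∩ D).Infinite ∧ (A \ D).Infinite})
    ⟨_, univ, rfl, fun A hA => (exists_split A hA).imp fun D hD => ⟨mem_univ D, hD⟩⟩

theorem aleph0_lt_splittingNumber : Cardinal.aleph0 < splittingNumber := by
  obtain ⟨S, hSmk, hS⟩ := exists_splitting_family_mk_eq
  rw [← hSmk, ← not_le, Cardinal.mk_le_aleph0_iff, countable_coe_iff]
  intro hSc
  obtain ⟨D, hD, -⟩ := hS univ infinite_univ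
  obtain ⟨f, rfl⟩ := hSc.exists_eq_range ⟨D, hD⟩
  obtain ⟨A, hA, hAf⟩ := exists_infinite_unsplit_of_seq f
  obtain ⟨_, ⟨n, rfl⟩, h₁, h₂⟩ := hS A hA
  exact (hAf n).elim h₁ h₂

theorem exists_infinite_unsplit {S : Set (Set ℕ)} (hS : Cardinal.mk S < splittingNumber) :
    ∃ A : Set ℕ, A.Infinite ∧ ∀ D ∈ S, (A ∩ D).Finite ∨ (A \ D).Finite := by
  by_contra! h
  exact hS.not_ge (csInf_le' ⟨S, rfl, h⟩)

end Splitting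

theorem exists_strictMono_zero_succ_mem {A : Set ℕ} (hA : A.Infinite) :
    ∃ a : ℕ → ℕ, a 0 = 0 ∧ StrictMono a ∧ ∀ n, a (n + 1) ∈ A := by
  obtain ⟨φ, hφ, hφA⟩ := extraction_of_frequently_atTop (P := (· ∈ A))
    (Nat.frequently_atTop_iff_infinite.2 hA)
  refine ⟨fun n => if n = 0 then 0 else φ n, rfl, strictMono_nat_of_lt_succ fun n => ?_,
    fun n => by simpa using hφA (n + 1)⟩
  rcases n with _ | n
  · simpa using zero_lt_one.trans_le (hφ.id_le 1)
  · simpa using hφ (n + 1).lt_add_one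

section Blocks

variable {a : ℕ → ℕ}

def blockIndex (a : ℕ → ℕ) (k : ℕ) : ℕ := Nat.findGreatest (fun n => a n ≤ k) k

def blockReverse (a : ℕ → ℕ) (k : ℕ) : ℕ :=
  a (blockIndex a k) + a (blockIndex a k + 1) - 1 - k

def blockShift (a : ℕ → ℕ) (k : ℕ) : ℕ := blockReverse a (blockReverse a k - 1)

theorem blockIndex_spec (ha0 : a 0 = 0) (ha : StrictMono a) (k : ℕ) :
    a (blockIndex a k) ≤ k ∧ k < a (blockIndex a k + 1) := by
  have hle : a (blockIndex a k) ≤ k :=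
    Nat.findGreatest_spec (P := fun n => a n ≤ k) (Nat.zero_le k) (by simp [ha0])
  refine ⟨hle, not_le.1 fun h => ?_⟩
  have : blockIndex a k + 1 ≤ blockIndex a k :=
    Nat.le_findGreatest (P := fun n => a n ≤ k) (ha.le_apply.trans h) h
  omega

theorem blockIndex_eq (ha0 : a 0 = 0) (ha : StrictMono a) {n k : ℕ} (h₁ : a n ≤ k)
    (h₂ : k < a (n + 1)) : blockIndex a k = n := by
  obtain ⟨h₃, h₄⟩ := blockIndex_spec ha0 ha k
  have : blockIndex a k < n + 1 := ha.lt_iff_lt.1 (h₃.trans_lt h₂)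
  have : n < blockIndex a k + 1 := ha.lt_iff_lt.1 (h₁.trans_lt h₄)
  omega

theorem blockReverse_eq (ha0 : a 0 = 0) (ha : StrictMono a) {n k : ℕ} (h₁ : a n ≤ k)
    (h₂ : k < a (n + 1)) : blockReverse a k = a n + a (n + 1) - 1 - k := by
  rw [blockReverse, blockIndex_eq ha0 ha h₁ h₂]

theorem blockReverse_involutive (ha0 : a 0 = 0) (ha : StrictMono a) :
    Involutive (blockReverse a) := fun k => by
  obtain ⟨h₁, h₂⟩ := blockIndex_spec ha0 ha k
  rw [blockReverse_eq ha0 ha h₁ h₂,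
    blockReverse_eq ha0 ha (n := blockIndex a k) (by omega) (by omega)]
  omega

theorem blockShift_cases (ha0 : a 0 = 0) (ha : StrictMono a) (k : ℕ) :
    blockShift a k = k + 1 ∨ k + 1 = a 1 ∨ ∃ n, k + 1 = a (n + 2) ∧ blockShift a k = a n := by
  obtain ⟨h₁, h₂⟩ := blockIndex_spec ha0 ha k
  generalize blockIndex a k = n at h₁ h₂
  have hr := blockReverse_eq ha0 ha h₁ h₂
  have hn : a n < a (n + 1) := ha (by omega)
  rcases Nat.lt_or_ge (k + 1) (a (n + 1)) with hmid | htop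
  · left
    rw [blockShift, hr, blockReverse_eq ha0 ha (n := n) (by omega) (by omega)]
    omega
  right
  rcases n with _ | m
  · left
    simpa using htop.antisymm' h₂
  · right
    have hm : a m < a (m + 1) := ha (by omega)
    refine ⟨m, (by omega : k + 1 = a (m + 1 + 1)), ?_⟩
    rw [blockShift, hr, blockReverse_eq ha0 ha (n := m) (by omega) (by omega)]
    omega

theorem finite_setOf_notMem_of_finite_diff {A C D : Set ℕ} (ha : Injective a)
    (haA : ∀ n, a (n + 1) ∈ A) (hA : (A \ (· + 1) '' C).Finite)
    (hCD : (C \ (· + 1) ⁻¹' D).Finite) : {n | a n ∉ D}.Finite := by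
  refine (((finite_singleton 0).union (hA.preimage ha.injOn)).union
    ((hCD.image (· + 1)).preimage ha.injOn)).subset ?_
  rintro (_ | n) hn
  · exact .inl (.inl rfl)
  by_cases hC : a (n + 1) ∈ (· + 1) '' C
  · obtain ⟨c, hc, hca⟩ := hC
    exact .inr ⟨c, ⟨hc, fun hcD => hn (hca ▸ hcD)⟩, hca⟩
  · exact .inl (.inr ⟨haA n, hC⟩)

theorem finite_diff_preimage_blockShift (ha0 : a 0 = 0) (ha : StrictMono a)
    {A C D : Set ℕ} (haA : ∀ n, a (n + 1) ∈ A) (hCD : (C \ (· + 1) ⁻¹' D).Finite)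
    (hA : (A ∩ (· + 1) '' C).Finite ∨ (A \ (· + 1) '' C).Finite) :
    (C \ blockShift a ⁻¹' D).Finite := by
  set T := {k ∈ C | ∃ n, k + 1 = a (n + 2) ∧ a n ∉ D}
  have hinj : InjOn (· + 1 : ℕ → ℕ) univ := (add_left_injective 1).injOn
  have hT : T.Finite := by
    rcases hA with hA | hA
    · refine (hA.preimage (hinj.mono (subset_univ _))).subset ?_
      rintro k ⟨hk, n, hkn, -⟩
      exact ⟨show k + 1 ∈ A from hkn ▸ haA (n + 1), k, hk, rfl⟩
    · refine ((finite_setOf_notMem_of_finite_diff ha.injective haA hA hCD).image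
        fun n => a (n + 2) - 1).subset ?_
      rintro k ⟨-, n, hkn, hnD⟩
      exact ⟨n, hnD, show a (n + 2) - 1 = k by omega⟩
  refine ((hCD.union ((finite_singleton (a 1)).preimage (hinj.mono (subset_univ _)))).union
    hT).subset ?_
  rintro k ⟨hk, hkD⟩
  rcases blockShift_cases ha0 ha k with h | h | ⟨n, hkn, h⟩
  · exact .inl (.inl ⟨hk, by simpa [h] using hkD⟩)
  · exact .inl (.inr h)
  · exact .inr ⟨hk, n, hkn, by simpa [h] using hkD⟩

end Blocks

theorem Ultrafilter.compl_singleton_mem_iff_ne_pure {α : Type*} (u : Ultrafilter α)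
    (x : α) : ({x}ᶜ : Set α) ∈ u ↔ u ≠ pure x := by
  rw [Ultrafilter.compl_mem_iff_notMem, not_iff_not, ← Ultrafilter.coe_le_coe,
    Ultrafilter.coe_pure, le_pure_iff, Ultrafilter.mem_coe]

namespace OmegaStar

def star (C : Set ℕ) : Set NStar := {u | C ∈ u.1}

theorem isClopen_star (C : Set ℕ) : IsClopen (star C) :=
  ⟨(ultrafilter_isClosed_basic C).preimage continuous_subtype_val,
    (ultrafilter_isOpen_basic C).preimage continuous_subtype_val⟩

instance : CompactSpace NStar := by
  have : {u : Ultrafilter ℕ | ∀ n, u ≠ pure n} = ⋂ n, {u | ({n}ᶜ : Set ℕ) ∈ u} := by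
    ext u
    simp only [mem_iInter, mem_ofPred_eq, Ultrafilter.compl_singleton_mem_iff_ne_pure]
  refine isCompact_iff_compactSpace.1 (IsClosed.isCompact (s := {u | ∀ n, u ≠ pure n}) ?_)
  exact this ▸ isClosed_iInter fun n => ultrafilter_isClosed_basic _

theorem exists_star_subset {W : Set NStar} (hW : IsOpen W) {u : NStar} (hu : u ∈ W) :
    ∃ C : Set ℕ, u ∈ star C ∧ star C ⊆ W := by
  obtain ⟨_, ⟨_, ⟨C, rfl⟩, rfl⟩, huC, hCW⟩ :=
    (ultrafilterBasis_is_basis.isInducing Topology.IsInducing.subtypeVal).exists_subset_of_mem_open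
      hu hW
  exact ⟨C, huC, hCW⟩

theorem exists_star_between {K W : Set NStar} (hK : IsCompact K) (hW : IsOpen W) (hKW : K ⊆ W) :
    ∃ C : Set ℕ, K ⊆ star C ∧ star C ⊆ W := by
  choose! C hC hCW using fun u (hu : u ∈ K) => exists_star_subset hW (hKW hu)
  obtain ⟨t, htK, hKt⟩ := hK.elim_nhds_subcover (fun u => star (C u))
    fun u hu => (isClopen_star _).isOpen.mem_nhds (hC u hu)
  refine ⟨⋃ u ∈ t, C u, fun v hv => ?_, fun v hv => ?_⟩
  · obtain ⟨u, hu, hvu⟩ := mem_iUnion₂.1 (hKt hv)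
    exact (v.1.finite_biUnion_mem_iff t.finite_toSet).2 ⟨u, hu, hvu⟩
  · obtain ⟨u, hu, hvu⟩ := (v.1.finite_biUnion_mem_iff t.finite_toSet).1 hv
    exact hCW u (htK u hu) hvu

theorem star_nonempty {C : Set ℕ} (hC : C.Infinite) : (star C).Nonempty := by
  have := hC.cofinite_inf_principal_neBot
  obtain ⟨u, hu⟩ := Ultrafilter.exists_le (cofinite ⊓ 𝓟 C)
  refine ⟨⟨u, fun n => (Ultrafilter.compl_singleton_mem_iff_ne_pure u n).1 ?_⟩,
    le_principal_iff.1 (hu.trans inf_le_right)⟩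
  exact (hu.trans inf_le_left) (finite_singleton n).compl_mem_cofinite

theorem mapsTo_star_iff {m : ℕ → ℕ} {T : NStar → NStar}
    (hT : ∀ u, (T u).1 = Ultrafilter.map m u.1) {C D : Set ℕ} :
    MapsTo T (star C) (star D) ↔ (C \ m ⁻¹' D).Finite := by
  simp only [MapsTo, star, mem_ofPred_eq, hT, Ultrafilter.mem_map]
  refine ⟨fun h => not_infinite.1 fun hinf => ?_, fun hfin u hu => ?_⟩
  · obtain ⟨u, hu⟩ := star_nonempty hinf
    exact Ultrafilter.compl_mem_iff_notMem.1 (mem_of_superset hu fun x hx => hx.2)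
      (h (mem_of_superset hu sdiff_subset))
  · exact mem_of_superset (inter_mem hu (ucofinite u hfin.compl_mem_cofinite))
      fun x ⟨hxC, hx⟩ => by_contra fun hxD => hx ⟨hxC, hxD⟩

theorem map_ne_pure_of_involutive {m : ℕ → ℕ} (hm : Involutive m) (u : NStar) (n : ℕ) :
    Ultrafilter.map m u.1 ≠ pure n := fun h => u.2 (m n) <| by
  rw [← Ultrafilter.map_pure, ← h, Ultrafilter.map_map, hm.comp_self, Ultrafilter.map_id]

def involMap (m : ℕ → ℕ) (hm : Involutive m) (u : NStar) : NStar :=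
  ⟨Ultrafilter.map m u.1, map_ne_pure_of_involutive hm u⟩

def involHomeo (m : ℕ → ℕ) (hm : Involutive m) : NStar ≃ₜ NStar where
  toEquiv := Involutive.toPerm (involMap m hm) fun u =>
    Subtype.ext <| by simp [involMap, hm.comp_self]
  continuous_toFun := ((continuous_umap m).comp continuous_subtype_val).subtype_mk _
  continuous_invFun := ((continuous_umap m).comp continuous_subtype_val).subtype_mk _


theorem exists_mem_isoSigmaInv_induced {a : ℕ → ℕ} (ha0 : a 0 = 0) (ha : StrictMono a) :
    ∃ τ ∈ IsoSigmaInv, ∀ u, (τ u).1 = Ultrafilter.map (blockShift a) u.1 := by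
  set R := involHomeo (blockReverse a) (blockReverse_involutive ha0 ha)
  have hR : ∀ u, R (R u) = u := R.toEquiv.left_inv
  refine ⟨R * sigmaShift⁻¹ * R, ⟨R, fun u => hR _⟩, fun u => ?_⟩
  change Ultrafilter.map (blockReverse a)
    (Ultrafilter.map (· - 1) (Ultrafilter.map (blockReverse a) u.1)) = _
  simp only [Ultrafilter.map_map]
  rfl

theorem exists_mapsTo_star_of_mapsTo {f : NStar ≃ₜ NStar} {K U : Set NStar} (hK : IsCompact K)
    (hU : IsOpen U) (hf : MapsTo f K U) :
    ∃ C D : Set ℕ, MapsTo f (star C) (star D) ∧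
      ∀ g : NStar ≃ₜ NStar, MapsTo g (star C) (star D) → MapsTo g K U := by
  obtain ⟨C, hKC, hCU⟩ := exists_star_between hK (hU.preimage f.continuous) hf.subset_preimage
  obtain ⟨D, hCD, hDU⟩ := exists_star_between ((isClopen_star C).isClosed.isCompact.image
    f.continuous) hU (image_subset_iff.2 hCU)
  exact ⟨C, D, image_subset_iff.1 hCD, fun g hg => hg.mono hKC hDU⟩

theorem exists_finite_mapsTo_star_nhds {V : Set (NStar ≃ₜ NStar)} (hV : IsOpen V)
    {f : NStar ≃ₜ NStar} (hf : f ∈ V) :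
    ∃ P : Set (Set ℕ × Set ℕ), P.Finite ∧ (∀ p ∈ P, MapsTo f (star p.1) (star p.2)) ∧
      ∀ g : NStar ≃ₜ NStar, (∀ p ∈ P, MapsTo g (star p.1) (star p.2)) → g ∈ V := by
  obtain ⟨_, ⟨F, ⟨hFfin, hFsub⟩, rfl⟩, hfF, hFV⟩ :=
    HomeoCO.isTopologicalBasis.exists_subset_of_mem_open hf hV
  have key : ∀ s ∈ F, ∃ p : Set ℕ × Set ℕ, MapsTo f (star p.1) (star p.2) ∧
      ∀ g : NStar ≃ₜ NStar, MapsTo g (star p.1) (star p.2) → g ∈ s := by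
    intro s hs
    obtain ⟨K, U, hK, hU, rfl⟩ := hFsub s hs
    obtain ⟨C, D, hfCD, hCD⟩ := exists_mapsTo_star_of_mapsTo hK hU (hfF _ hs)
    exact ⟨(C, D), hfCD, hCD⟩
  choose! p hfp hp using key
  exact ⟨p '' F, hFfin.image p, forall_mem_image.2 hfp, fun g hg =>
    hFV (mem_sInter.2 fun s hs => hp s hs g (hg _ (mem_image_of_mem p hs)))⟩

theorem inter_isoSigmaInv_nonempty_of_forall_shift_mem {ι : Type}
    (hι : Cardinal.mk ι < splittingNumber) {W : ι → Set (NStar ≃ₜ NStar)}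
    (hW : ∀ i, IsOpen (W i)) (hσ : ∀ i, sigmaShift ∈ W i) :
    ((⋂ i, W i) ∩ IsoSigmaInv).Nonempty := by
  choose P hPfin hPσ hPW using fun i => exists_finite_mapsTo_star_nhds (hW i) (hσ i)
  set S := ⋃ i, (fun p : Set ℕ × Set ℕ => (· + 1) '' p.1) '' P i
  have hS : Cardinal.mk S < splittingNumber := by
    have hℵ₀ := Splitting.aleph0_lt_splittingNumber
    refine (Cardinal.mk_iUnion_le _).trans_lt (Cardinal.mul_lt_of_lt hℵ₀.le hι ?_)
    refine (ciSup_le' fun i => ?_).trans_lt hℵ₀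
    exact Cardinal.mk_le_aleph0_iff.2 ((hPfin i).image _).countable.to_subtype
  obtain ⟨A, hA, hAS⟩ := Splitting.exists_infinite_unsplit hS
  obtain ⟨a, ha0, ha, haA⟩ := exists_strictMono_zero_succ_mem hA
  obtain ⟨τ, hτ, hτa⟩ := exists_mem_isoSigmaInv_induced ha0 ha
  refine ⟨τ, mem_iInter.2 fun i => hPW i τ fun p hp => ?_, hτ⟩
  rw [mapsTo_star_iff hτa]
  exact finite_diff_preimage_blockShift ha0 ha haA
    ((mapsTo_star_iff fun _ => rfl).1 (hPσ i p hp)) (hAS _ (mem_iUnion.2 ⟨i, p, hp, rfl⟩))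

end OmegaStar

theorem Isomorphic.inv {f g : NStar ≃ₜ NStar} (h : Isomorphic f g) : Isomorphic f⁻¹ g⁻¹ := by
  obtain ⟨k, hk⟩ := h
  refine ⟨k, fun u => ?_⟩
  simpa using congrArg (⇑g⁻¹) (hk (f⁻¹ u)).symm

theorem Isomorphic.conj {f g : NStar ≃ₜ NStar} (h : Isomorphic f g) (k : NStar ≃ₜ NStar) :
    Isomorphic (k⁻¹ * f * k) g := by
  obtain ⟨k₀, hk₀⟩ := h
  exact ⟨k₀ * k, fun u => by simpa using hk₀ (k u)⟩

theorem inter_isoSigmaInv_nonempty_of_inter_isoSigma {ι : Type}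
    (hι : Cardinal.mk ι < splittingNumber) {U : ι → Set (NStar ≃ₜ NStar)}
    (hU : ∀ i, IsOpen (U i)) (h : ((⋂ i, U i) ∩ IsoSigma).Nonempty) :
    ((⋂ i, U i) ∩ IsoSigmaInv).Nonempty := by
  obtain ⟨f, hfU, k, hk⟩ := h
  have hσ : k⁻¹ * sigmaShift * k = f := Homeomorph.ext fun u => by simp [← hk]
  obtain ⟨τ, hτ, hτσ⟩ := OmegaStar.inter_isoSigmaInv_nonempty_of_forall_shift_mem hι
    (W := fun i => (fun h => k⁻¹ * h * k⁻¹⁻¹) ⁻¹' U i)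
    (fun i => (HomeoCO.continuous_conj k⁻¹).isOpen_preimage _ (hU i))
    (fun i => by simpa [hσ] using mem_iInter.1 hfU i)
  exact ⟨k⁻¹ * τ * k, by simpa using hτ, Isomorphic.conj hτσ k⟩

/-- If `G ⊆ H(ω*)` is an intersection of fewer than `𝔰` many open sets, then `G`
meets `Iso(σ)` if and only if `G` meets `Iso(σ⁻¹)`. -/
theorem stmt_14 (ι : Type) (hι : Cardinal.mk ι < splittingNumber)
    (U : ι → Set (NStar ≃ₜ NStar)) (hU : ∀ i, IsOpen (U i)) :
    ((⋂ i, U i) ∩ IsoSigma).Nonempty ↔ ((⋂ i, U i) ∩ IsoSigmaInv).Nonempty := by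
  refine ⟨inter_isoSigmaInv_nonempty_of_inter_isoSigma hι hU, ?_⟩
  rintro ⟨f, hfU, hf⟩
  obtain ⟨g, hgU, hg⟩ := inter_isoSigmaInv_nonempty_of_inter_isoSigma hι
    (fun i => HomeoCO.continuous_inv.isOpen_preimage _ (hU i)) ⟨f⁻¹, by simpa using hfU, hf.inv⟩
  exact ⟨g⁻¹, by simpa using hgU, hg.inv⟩
end
end
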